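/- arXiv:2306.14034 — 5 statements merged into one kernel-verified Lean document; each statement's English description precedes it below -/
import Mathlib

section
/- Let m and u be integers with 1 < u ≤ m and let Λ = {0, m} ∪ {n ∈ ℕ : n ≥ m+u}, a numerical semigroup of rank 2. Then the number of great-grandchildren of Λ equals C(m−1,3) + (u−δ_a)(m−2) + δ_b + 2δ_c + δ_d, where C(m−1,3) = (m−1)(m−2)(m−3)/6, δ_a = 1 if m < 2u and 0 otherwise, δ_b = 1 if u = m or 2u ≠ m and 0 otherwise, δ_c = 1 if u < m−1 and 2u+1 ≠ m and 0 otherwise, and δ_d = 1 if u = m−1 and 0 otherwise. -/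
/-- A numerical semigroup: a cofinite submonoid of ℕ, viewed as a set of naturals. -/
def IsNumericalSemigroup (S : Set ℕ) : Prop :=
  0 ∈ S ∧ (∀ a ∈ S, ∀ b ∈ S, a + b ∈ S) ∧ ∃ N : ℕ, ∀ n : ℕ, N ≤ n → n ∈ S

/-- The conductor: the smallest `N` such that every `n ≥ N` belongs to `S`. -/
noncomputable def sgConductor (S : Set ℕ) : ℕ :=
  sInf {N : ℕ | ∀ n : ℕ, N ≤ n → n ∈ S}

/-- The genus: the number of gaps. -/
noncomputable def sgGenus (S : Set ℕ) : ℕ :=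
  Sᶜ.ncard

/-- The rank `k(Λ) = c(Λ) - g(Λ)`. -/
noncomputable def sgRank (S : Set ℕ) : ℕ :=
  sgConductor S - sgGenus S

/-- The multiplicity: the smallest nonzero element. -/
noncomputable def sgMultiplicity (S : Set ℕ) : ℕ :=
  sInf {n : ℕ | n ∈ S ∧ n ≠ 0}

/-- The Frobenius number: the largest gap, i.e. the conductor minus one. -/
noncomputable def sgFrobenius (S : Set ℕ) : ℕ :=
  sgConductor S - 1

/-- `sgElem S j` is the element `λ_j` of `S = {λ_0 = 0 < λ_1 < λ_2 < ⋯}`. -/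
noncomputable def sgElem (S : Set ℕ) (j : ℕ) : ℕ :=
  Nat.nth (· ∈ S) j

/-- The jump `u_j = λ_{j+1} - λ_j`. -/
noncomputable def sgJump (S : Set ℕ) (j : ℕ) : ℕ :=
  sgElem S (j + 1) - sgElem S j

/-- The left elements: elements of `S` smaller than the Frobenius number. -/
def sgLeftElements (S : Set ℕ) : Set ℕ :=
  {x : ℕ | x ∈ S ∧ x + 1 < sgConductor S}

/-- A minimal generator: a nonzero element not the sum of two nonzero elements. -/
def IsMinimalGenerator (S : Set ℕ) (x : ℕ) : Prop :=
  x ∈ S ∧ x ≠ 0 ∧ ¬ ∃ a ∈ S, ∃ b ∈ S, a ≠ 0 ∧ b ≠ 0 ∧ a + b = x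

/-- A right generator: a minimal generator larger than the Frobenius number. -/
def IsRightGenerator (S : Set ℕ) (x : ℕ) : Prop :=
  IsMinimalGenerator S x ∧ sgFrobenius S < x

/-- A strong generator: a right generator `μ` such that `μ + m(Λ)` is a minimal
generator of `Λ ∖ {μ}`. -/
noncomputable def IsStrongGenerator (S : Set ℕ) (x : ℕ) : Prop :=
  IsRightGenerator S x ∧ IsMinimalGenerator (S \ {x}) (x + sgMultiplicity S)

/-- A new generator of `Λ`: a minimal generator of `Λ` that is not a minimal
generator of `Λ ∪ {F(Λ)}`. -/
noncomputable def IsNewGenerator (S : Set ℕ) (x : ℕ) : Prop :=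
  IsMinimalGenerator S x ∧ ¬ IsMinimalGenerator (S ∪ {sgFrobenius S}) x

/-- `x` (an element `λ_s ≥ c(Λ)`) is an order-`p` seed of `Λ` if
`x + λ_p ≠ λ_i + λ_j` for all `p < i ≤ j < s`, i.e. for all `i ≤ j` with
`p < i` and `λ_j < x`. -/
noncomputable def IsSeed (S : Set ℕ) (p x : ℕ) : Prop :=
  sgConductor S ≤ x ∧ ∀ i j : ℕ, p < i → i ≤ j → sgElem S j < x →
    x + sgElem S p ≠ sgElem S i + sgElem S j

/-- `T` is a child of `S`: obtained by removing one right generator. -/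
def IsChild (T S : Set ℕ) : Prop :=
  ∃ μ : ℕ, IsRightGenerator S μ ∧ T = S \ {μ}

/-- A grandchild: a child of a child. -/
def IsGrandchild (T S : Set ℕ) : Prop :=
  ∃ C : Set ℕ, IsChild C S ∧ IsChild T C

/-- A great-grandchild: a child of a grandchild. -/
def IsGreatGrandchild (T S : Set ℕ) : Prop :=
  ∃ C : Set ℕ, IsGrandchild C S ∧ IsChild T C

/-- `⟨a,b,c,…⟩|_κ`: the smallest numerical semigroup containing a given set. -/
def sgClosure (A : Set ℕ) : Set ℕ :=
  ⋂₀ {S : Set ℕ | IsNumericalSemigroup S ∧ A ⊆ S}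


namespace S12

def L (m u : ℕ) : Set ℕ := ({0, m} : Set ℕ) ∪ {n : ℕ | m + u ≤ n}

lemma memL {m u n : ℕ} : n ∈ L m u ↔ n = 0 ∨ n = m ∨ m + u ≤ n := by
  simp [L, Set.mem_union, Set.mem_setOf_eq, Set.mem_insert_iff]
  tauto

lemma conductor_eq {S : Set ℕ} {k : ℕ} (hk : ∀ n, k ≤ n → n ∈ S)
    (h1 : 1 ≤ k) (hnot : k - 1 ∉ S) : sgConductor S = k := by
  refine le_antisymm (Nat.sInf_le hk) (le_csInf ⟨k, hk⟩ ?_)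
  intro b hb
  by_contra hlt
  push_neg at hlt
  exact hnot (hb (k - 1) (by omega))

lemma conductor_L (m u : ℕ) (hu : 1 < u) (hum : u ≤ m) : sgConductor (L m u) = m + u := by
  refine conductor_eq (fun n hn => memL.mpr (Or.inr (Or.inr hn))) (by omega) ?_
  intro h
  rcases memL.mp h with h | h | h <;> omega

lemma conductor_L1 (m u a : ℕ) (hu : 1 < u) (hum : u ≤ m) (ha : m + u ≤ a) :
    sgConductor (L m u \ {a}) = a + 1 := by
  refine conductor_eq (fun n hn => ⟨memL.mpr (Or.inr (Or.inr (by omega))), by simp; omega⟩)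
    (by omega) (by simp)

lemma conductor_L2 (m u a b : ℕ) (hu : 1 < u) (hum : u ≤ m) (ha : m + u ≤ a) (hab : a < b) :
    sgConductor (L m u \ {a, b}) = b + 1 := by
  refine conductor_eq (fun n hn => ⟨memL.mpr (Or.inr (Or.inr (by omega))), by simp; omega⟩)
    (by omega) (by simp)



def Hit (a b x t : ℕ) : Prop := t = a ∨ t = b ∨ t = x

def OKt (m u a b x t : ℕ) : Prop :=
  t ≠ 2 * m ∧ (2 * m + u ≤ t → Hit a b x (t - m)) ∧
    ∀ p q : ℕ, m + u ≤ p → m + u ≤ q → p + q = t → Hit a b x p ∨ Hit a b x q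

def Valid (m u a b x : ℕ) : Prop :=
  m + u ≤ a ∧ a < b ∧ b < x ∧ OKt m u a b x a ∧ OKt m u a b x b ∧ OKt m u a b x x

lemma mem_triple {a b x n : ℕ} : n ∈ ({a, b, x} : Set ℕ) ↔ Hit a b x n := by
  simp [Hit, Set.mem_insert_iff]

lemma nd_iff {m u : ℕ} (hu : 1 < u) (hum : u ≤ m) {a b x : ℕ} (ha : m + u ≤ a)
    (hab : a < b) (hbx : b < x) (t : ℕ) :
    (¬ ∃ p ∈ L m u \ {a, b, x}, ∃ q ∈ L m u \ {a, b, x}, p ≠ 0 ∧ q ≠ 0 ∧ p + q = t) ↔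
      OKt m u a b x t := by
  constructor
  · intro h
    refine ⟨?_, ?_, ?_⟩
    · intro ht
      exact h ⟨m, ⟨by rw [memL]; omega, by rw [mem_triple]; unfold Hit; omega⟩,
        m, ⟨by rw [memL]; omega, by rw [mem_triple]; unfold Hit; omega⟩,
        by omega, by omega, by omega⟩
    · intro h2
      by_contra hnot
      refine h ⟨m, ⟨by rw [memL]; omega, ?_⟩, t - m,
        ⟨by rw [memL]; omega, ?_⟩, by omega, by omega, by omega⟩
      · rw [mem_triple]; unfold Hit; omega
      · rw [mem_triple]; exact hnot
    · intro p q hp hq hpq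
      by_contra hnot
      push_neg at hnot
      exact h ⟨p, ⟨by rw [memL]; omega, by rw [mem_triple]; exact hnot.1⟩, q,
        ⟨by rw [memL]; omega, by rw [mem_triple]; exact hnot.2⟩,
        by omega, by omega, hpq⟩
  · rintro ⟨h1, h2, h3⟩ ⟨p, ⟨hpL, hpA⟩, q, ⟨hqL, hqA⟩, hp0, hq0, hpq⟩
    rw [mem_triple] at hpA hqA
    rcases memL.mp hpL with hp | hp | hp
    · exact hp0 hp
    · rcases memL.mp hqL with hq | hq | hq
      · exact hq0 hq
      · exact h1 (by omega)
      · have := h2 (by omega)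
        unfold Hit at this hqA
        omega
    · rcases memL.mp hqL with hq | hq | hq
      · exact hq0 hq
      · have := h2 (by omega)
        unfold Hit at this hpA
        omega
      · rcases h3 p q hp hq hpq with h | h
        · exact hpA h
        · exact hqA h

lemma diff_pair {α : Type*} (S : Set α) (a b : α) : (S \ {a}) \ {b} = S \ ({a, b} : Set α) := by
  rw [Set.diff_diff, Set.singleton_union]

lemma diff_triple {α : Type*} (S : Set α) (a b x : α) : (S \ ({a, b} : Set α)) \ {x} = S \ ({a, b, x} : Set α) := by
  rw [Set.diff_diff]
  congr 1
  ext n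
  simp [Set.mem_insert_iff]
  tauto

lemma ggc_iff {m u : ℕ} (hu : 1 < u) (hum : u ≤ m) (T : Set ℕ) :
    IsGreatGrandchild T (L m u) ↔
      ∃ a b x : ℕ, Valid m u a b x ∧ T = L m u \ {a, b, x} := by
  constructor
  · rintro ⟨C, ⟨C1, ⟨a, hra, rfl⟩, ⟨b, hrb, rfl⟩⟩, ⟨x, hrx, rfl⟩⟩
    have hfL : sgFrobenius (L m u) = m + u - 1 := by
      rw [sgFrobenius, conductor_L m u hu hum]
    have ha : m + u ≤ a := by
      have := hra.2; rw [hfL] at this; omega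
    have hab : a < b := by
      have := hrb.2
      rw [sgFrobenius, conductor_L1 m u a hu hum ha] at this; omega
    rw [diff_pair] at hrx
    have hbx : b < x := by
      have := hrx.2
      rw [sgFrobenius, conductor_L2 m u a b hu hum ha hab] at this; omega
    refine ⟨a, b, x, ⟨ha, hab, hbx, ?_, ?_, ?_⟩, by ext n; simp [Set.mem_insert_iff]; tauto⟩
    · rw [← nd_iff hu hum ha hab hbx a]
      intro ⟨p, ⟨hp, _⟩, q, ⟨hq, _⟩, h⟩
      exact hra.1.2.2 ⟨p, hp, q, hq, h⟩
    · rw [← nd_iff hu hum ha hab hbx b]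
      intro ⟨p, hp, q, hq, h⟩
      refine hrb.1.2.2 ⟨p, ⟨hp.1, ?_⟩, q, ⟨hq.1, ?_⟩, h⟩
      · have := hp.2; rw [mem_triple] at this; unfold Hit at this
        simp; omega
      · have := hq.2; rw [mem_triple] at this; unfold Hit at this
        simp; omega
    · rw [← nd_iff hu hum ha hab hbx x]
      intro ⟨p, hp, q, hq, h⟩
      refine hrx.1.2.2 ⟨p, ⟨hp.1, ?_⟩, q, ⟨hq.1, ?_⟩, h⟩
      · have := hp.2; rw [mem_triple] at this; unfold Hit at this
        simp; omega
      · have := hq.2; rw [mem_triple] at this; unfold Hit at this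
        simp; omega
  · rintro ⟨a, b, x, ⟨ha, hab, hbx, oka, okb, okx⟩, rfl⟩
    have nda := (nd_iff hu hum ha hab hbx a).mpr oka
    have ndb := (nd_iff hu hum ha hab hbx b).mpr okb
    have ndx := (nd_iff hu hum ha hab hbx x).mpr okx
    refine ⟨L m u \ {a, b}, ⟨L m u \ {a}, ⟨a, ⟨⟨(by rw [memL]; omega), by omega, ?_⟩, ?_⟩, rfl⟩,
      ⟨b, ⟨⟨⟨(by rw [memL]; omega), by simp; omega⟩, by omega, ?_⟩, ?_⟩, (diff_pair _ _ _).symm⟩⟩,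
      ⟨x, ⟨⟨⟨(by rw [memL]; omega), by simp; omega⟩, by omega, ?_⟩, ?_⟩, (diff_triple _ _ _ _).symm⟩⟩
    · -- a minimal generator of L
      intro ⟨p, hp, q, hq, hp0, hq0, hpq⟩
      refine nda ⟨p, ⟨hp, ?_⟩, q, ⟨hq, ?_⟩, hp0, hq0, hpq⟩
      · rw [mem_triple]; unfold Hit; omega
      · rw [mem_triple]; unfold Hit; omega
    · rw [sgFrobenius, conductor_L m u hu hum]; omega
    · -- b minimal generator of L \ {a}
      intro ⟨p, hp, q, hq, hp0, hq0, hpq⟩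
      have hpa : p ≠ a := by have := hp.2; simpa using this
      have hqa : q ≠ a := by have := hq.2; simpa using this
      refine ndb ⟨p, ⟨hp.1, ?_⟩, q, ⟨hq.1, ?_⟩, hp0, hq0, hpq⟩
      · rw [mem_triple]; unfold Hit; omega
      · rw [mem_triple]; unfold Hit; omega
    · rw [sgFrobenius, conductor_L1 m u a hu hum ha]; omega
    · -- x minimal generator of L \ {a, b}
      intro ⟨p, hp, q, hq, hp0, hq0, hpq⟩
      have hpa : p ≠ a ∧ p ≠ b := by have := hp.2; simp at this; tauto
      have hqa : q ≠ a ∧ q ≠ b := by have := hq.2; simp at this; tauto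
      refine ndx ⟨p, ⟨hp.1, ?_⟩, q, ⟨hq.1, ?_⟩, hp0, hq0, hpq⟩
      · rw [mem_triple]; unfold Hit; omega
      · rw [mem_triple]; unfold Hit; omega
    · rw [sgFrobenius, conductor_L2 m u a b hu hum ha hab]; omega



def InI (m u t : ℕ) : Prop := m + u ≤ t ∧ t < 2 * m + u ∧ t ≠ 2 * m

lemma okt_inI {m u a b x t : ℕ} (hum : u ≤ m) (h : InI m u t) : OKt m u a b x t := by
  obtain ⟨h1, h2, h3⟩ := h
  exact ⟨h3, fun h' => absurd h' (by omega), by intro p q hp hq hpq; exfalso; omega⟩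

lemma classify {m u : ℕ} (hu : 1 < u) (hum : u ≤ m) (a b x : ℕ) :
    Valid m u a b x ↔
      (InI m u a ∧ InI m u b ∧ InI m u x ∧ a < b ∧ b < x) ∨
      (∃ X : ℕ, 2*m+u ≤ X ∧ X < 2*m+2*u ∧ X ≠ 3*m ∧ x = X ∧ a < b ∧
        ((b = X - m ∧ InI m u a) ∨ (a = X - m ∧ InI m u b))) ∨
      ((u < m ∧ 2*u ≠ m) ∧ a = m+u ∧ b = m+2*u ∧ x = 2*m+2*u) ∨
      ((u+1 < m ∧ 2*u+1 ≠ m) ∧ (a = m+u ∨ a = m+u+1) ∧ b = m+2*u+1 ∧ x = 2*m+2*u+1) ∨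
      (u+1 = m ∧ a = m+u ∧ b = 2*m+u ∧ x = 3*m+u) ∨
      (u = m ∧ a = 2*m+1 ∧ b = 3*m+1 ∧ x = 4*m+1) := by
  constructor
  · rintro ⟨ha, hab, hbx, oka, okb, okx⟩
    by_cases hx : x < 2*m+u
    · exact Or.inl ⟨⟨ha, by omega, oka.1⟩, ⟨by omega, by omega, okb.1⟩,
        ⟨by omega, hx, okx.1⟩, hab, hbx⟩
    · push_neg at hx
      have hxm := okx.2.1 (by omega)
      unfold Hit at hxm
      have hxm' : x - m = a ∨ x - m = b := by omega
      rcases hxm' with hxa | hxb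
      -- case x - m = a : F1 with y = b
      · have hblt : b < 2*m+u := by
          by_contra h
          push_neg at h
          have h0 := okb.2.1 (by omega)
          unfold Hit at h0
          omega
        have hxlt : x < 2*m+2*u := by
          by_contra h
          push_neg at h
          have h1 := okx.2.2 (m+u) (x-(m+u)) le_rfl (by omega) (by omega)
          unfold Hit at h1
          omega
        exact Or.inr (Or.inl ⟨x, hx, hxlt, by have := oka.1; omega, rfl, hab,
          Or.inr ⟨by omega, ⟨by omega, hblt, okb.1⟩⟩⟩)
      -- case x - m = b
      · by_cases hblt : b < 2*m+u
        · by_cases hxlt : x < 2*m+2*u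
          · -- F1 with y = a
            exact Or.inr (Or.inl ⟨x, hx, hxlt, by have := okb.1; omega, rfl, hab,
              Or.inl ⟨by omega, ⟨ha, by omega, oka.1⟩⟩⟩)
          · push_neg at hxlt
            have h1 := okx.2.2 (m+u) (x-(m+u)) le_rfl (by omega) (by omega)
            unfold Hit at h1
            by_cases hx2 : x < 2*m+2*u+2
            · -- x = 2m+2u or 2m+2u+1
              by_cases hxv : x = 2*m+2*u
              · refine Or.inr (Or.inr (Or.inl ⟨⟨by omega, by have := okb.1; omega⟩,
                  by omega, by omega, hxv⟩))
              · have hxv' : x = 2*m+2*u+1 := by omega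
                refine Or.inr (Or.inr (Or.inr (Or.inl ⟨⟨by omega, by have := okb.1; omega⟩,
                  by omega, by omega, hxv'⟩)))
            · push_neg at hx2
              exfalso
              have h2 := okx.2.2 (m+u+1) (x-(m+u+1)) (by omega) (by omega) (by omega)
              unfold Hit at h2
              omega
        · push_neg at hblt
          -- chain case: a = b - m, b = a + m, x = a + 2m
          have hbm := okb.2.1 (by omega)
          unfold Hit at hbm
          have hba : b - m = a := by omega
          have haux : a < m + 2*u := by
            by_contra h
            push_neg at h
            have h3 := okb.2.2 (m+u) (b-(m+u)) le_rfl (by omega) (by omega)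
            unfold Hit at h3
            omega
          have h4 := okx.2.2 (m+u) (x-(m+u)) le_rfl (by omega) (by omega)
          unfold Hit at h4
          by_cases hmu : u = m
          · have haval : a = 2*m+1 := by
              by_contra h
              have ha2m : a ≠ 2*m := oka.1
              have h5 := okx.2.2 (2*m+1) (x-(2*m+1)) (by omega) (by omega) (by omega)
              unfold Hit at h5
              omega
            exact Or.inr (Or.inr (Or.inr (Or.inr (Or.inr ⟨hmu, haval, by omega, by omega⟩))))
          · have ha' : a = m+u := by omega
            have h6 := okx.2.2 (m+u+1) (x-(m+u+1)) (by omega) (by omega) (by omega)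
            unfold Hit at h6
            have hum1 : u + 1 = m := by omega
            exact Or.inr (Or.inr (Or.inr (Or.inr (Or.inl ⟨hum1, ha', by omega, by omega⟩))))
  · rintro (⟨hia, hib, hix, hab, hbx⟩ |
      ⟨X, hX1, hX2, hX3, rfl, hab, (⟨hb, hia⟩ | ⟨haX, hib⟩)⟩ |
      ⟨⟨h1, h2⟩, rfl, rfl, rfl⟩ | ⟨⟨h1, h2⟩, (rfl | rfl), rfl, rfl⟩ |
      ⟨h1, rfl, rfl, rfl⟩ | ⟨h1, rfl, rfl, rfl⟩)
    · exact ⟨hia.1, hab, hbx, okt_inI hum hia, okt_inI hum hib, okt_inI hum hix⟩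
    · -- F1, y = a
      subst hb
      obtain ⟨hi1, hi2, hi3⟩ := hia
      refine ⟨hi1, hab, by omega, okt_inI hum ⟨hi1, hi2, hi3⟩,
        okt_inI hum ⟨by omega, by omega, by omega⟩,
        ⟨by omega, fun _ => by unfold Hit; omega, ?_⟩⟩
      intro p q hp hq hpq
      exfalso; omega
    · -- F1, y = b
      subst haX
      obtain ⟨hi1, hi2, hi3⟩ := hib
      refine ⟨by omega, hab, by omega, okt_inI hum ⟨by omega, by omega, by omega⟩,
        okt_inI hum ⟨hi1, hi2, hi3⟩,
        ⟨by omega, fun _ => by unfold Hit; omega, ?_⟩⟩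
      intro p q hp hq hpq
      exfalso; omega
    · -- F2
      refine ⟨by omega, by omega, by omega,
        okt_inI hum ⟨by omega, by omega, by omega⟩,
        okt_inI hum ⟨by omega, by omega, by omega⟩,
        ⟨by omega, fun _ => by unfold Hit; omega, ?_⟩⟩
      intro p q hp hq hpq
      unfold Hit; omega
    · -- F3 a = m+u
      refine ⟨by omega, by omega, by omega,
        okt_inI hum ⟨by omega, by omega, by omega⟩,
        okt_inI hum ⟨by omega, by omega, by omega⟩,
        ⟨by omega, fun _ => by unfold Hit; omega, ?_⟩⟩
      intro p q hp hq hpq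
      unfold Hit; omega
    · -- F3 a = m+u+1
      refine ⟨by omega, by omega, by omega,
        okt_inI hum ⟨by omega, by omega, by omega⟩,
        okt_inI hum ⟨by omega, by omega, by omega⟩,
        ⟨by omega, fun _ => by unfold Hit; omega, ?_⟩⟩
      intro p q hp hq hpq
      unfold Hit; omega
    · -- F4
      refine ⟨by omega, by omega, by omega,
        okt_inI hum ⟨by omega, by omega, by omega⟩,
        ⟨by omega, fun _ => by unfold Hit; omega, by intro p q hp hq hpq; exfalso; omega⟩,
        ⟨by omega, fun _ => by unfold Hit; omega, by intro p q hp hq hpq; unfold Hit; omega⟩⟩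
    · -- F5
      refine ⟨by omega, by omega, by omega,
        okt_inI hum ⟨by omega, by omega, by omega⟩,
        ⟨by omega, fun _ => by unfold Hit; omega, by intro p q hp hq hpq; exfalso; omega⟩,
        ⟨by omega, fun _ => by unfold Hit; omega, by intro p q hp hq hpq; unfold Hit; omega⟩⟩




lemma card_sorted_triples (s : Finset ℕ) :
    ((s ×ˢ s ×ˢ s).filter fun t => t.1 < t.2.1 ∧ t.2.1 < t.2.2).card = s.card.choose 3 := by
  rw [← Finset.card_powersetCard 3 s]
  apply Finset.card_bij (fun (t : ℕ×ℕ×ℕ) _ => ({t.1, t.2.1, t.2.2} : Finset ℕ))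
  · rintro ⟨a, b, c⟩ ht
    simp only [Finset.mem_filter, Finset.mem_product] at ht
    obtain ⟨⟨ha, hb, hc⟩, hab, hbc⟩ := ht
    rw [Finset.mem_powersetCard]
    constructor
    · intro y hy
      simp only [Finset.mem_insert, Finset.mem_singleton] at hy
      rcases hy with rfl | rfl | rfl <;> assumption
    · exact Finset.card_eq_three.mpr ⟨a, b, c, by omega, by omega, by omega, rfl⟩
  · rintro ⟨a, b, c⟩ ht ⟨a', b', c'⟩ ht' h
    simp only [Finset.mem_filter, Finset.mem_product] at ht ht'
    have h1 : a ∈ ({a', b', c'} : Finset ℕ) := by rw [← h]; simp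
    have h2 : b ∈ ({a', b', c'} : Finset ℕ) := by rw [← h]; simp
    have h3 : c ∈ ({a', b', c'} : Finset ℕ) := by rw [← h]; simp
    have h4 : a' ∈ ({a, b, c} : Finset ℕ) := by rw [h]; simp
    have h5 : b' ∈ ({a, b, c} : Finset ℕ) := by rw [h]; simp
    have h6 : c' ∈ ({a, b, c} : Finset ℕ) := by rw [h]; simp
    simp only [Finset.mem_insert, Finset.mem_singleton] at h1 h2 h3 h4 h5 h6
    have : a = a' ∧ b = b' ∧ c = c' := by omega
    simp [Prod.ext_iff, this.1, this.2.1, this.2.2]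
  · intro s' hs'
    rw [Finset.mem_powersetCard] at hs'
    obtain ⟨a, b, c, hab, hac, hbc, rfl⟩ := Finset.card_eq_three.mp hs'.2
    have ha : a ∈ s := hs'.1 (by simp)
    have hb : b ∈ s := hs'.1 (by simp)
    have hc : c ∈ s := hs'.1 (by simp)
    obtain ⟨p, q, r, hpq, hqr, hp, hq, hr, hperm⟩ :
        ∃ p q r : ℕ, p < q ∧ q < r ∧ p ∈ s ∧ q ∈ s ∧ r ∈ s ∧
          ({p, q, r} : Finset ℕ) = {a, b, c} := by
      rcases lt_trichotomy a b with h1 | h1 | h1 <;> rcases lt_trichotomy b c with h2 | h2 | h2 <;>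
        rcases lt_trichotomy a c with h3 | h3 | h3 <;> first
          | omega
          | (exact ⟨a, b, c, by omega, by omega, ha, hb, hc, by ext y; simp only [Finset.mem_insert, Finset.mem_singleton]; try tauto⟩)
          | (exact ⟨a, c, b, by omega, by omega, ha, hc, hb, by ext y; simp only [Finset.mem_insert, Finset.mem_singleton]; try tauto⟩)
          | (exact ⟨b, a, c, by omega, by omega, hb, ha, hc, by ext y; simp only [Finset.mem_insert, Finset.mem_singleton]; try tauto⟩)
          | (exact ⟨b, c, a, by omega, by omega, hb, hc, ha, by ext y; simp only [Finset.mem_insert, Finset.mem_singleton]; try tauto⟩)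
          | (exact ⟨c, a, b, by omega, by omega, hc, ha, hb, by ext y; simp only [Finset.mem_insert, Finset.mem_singleton]; try tauto⟩)
          | (exact ⟨c, b, a, by omega, by omega, hc, hb, ha, by ext y; simp only [Finset.mem_insert, Finset.mem_singleton]; try tauto⟩)
    exact ⟨(p, q, r), by simp only [Finset.mem_filter, Finset.mem_product]; exact ⟨⟨hp, hq, hr⟩, hpq, hqr⟩, hperm⟩

/-! ### Counting -/

def ψ (m u : ℕ) : ℕ × ℕ × ℕ → Set ℕ := fun t => L m u \ {t.1, t.2.1, t.2.2}

def VSet (m u : ℕ) : Set (ℕ × ℕ × ℕ) := {t | Valid m u t.1 t.2.1 t.2.2}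

lemma ggc_set_eq {m u : ℕ} (hu : 1 < u) (hum : u ≤ m) :
    {T : Set ℕ | IsGreatGrandchild T (L m u)} = ψ m u '' VSet m u := by
  ext T
  simp only [Set.mem_setOf_eq, ggc_iff hu hum]
  constructor
  · rintro ⟨a, b, x, hv, rfl⟩
    exact ⟨(a, b, x), hv, rfl⟩
  · rintro ⟨⟨a, b, x⟩, hv, rfl⟩
    exact ⟨a, b, x, hv, rfl⟩

lemma psi_injOn {m u : ℕ} (hu : 1 < u) (hum : u ≤ m) : Set.InjOn (ψ m u) (VSet m u) := by
  rintro ⟨a, b, x⟩ hv ⟨a', b', x'⟩ hv' h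
  obtain ⟨ha, hab, hbx, -, -, -⟩ := (hv : Valid m u a b x)
  obtain ⟨ha', hab', hbx', -, -, -⟩ := (hv' : Valid m u a' b' x')
  have Ha : m + u ≤ a := ha
  have Hab : a < b := hab
  have Hbx : b < x := hbx
  have Ha' : m + u ≤ a' := ha'
  have Hab' : a' < b' := hab'
  have Hbx' : b' < x' := hbx'
  simp only [ψ] at h
  have key : ∀ n, m + u ≤ n → (Hit a b x n ↔ Hit a' b' x' n) := by
    intro n hn
    constructor
    · intro hh
      by_contra hno
      have hmem : n ∈ L m u \ {a', b', x'} :=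
        ⟨memL.mpr (Or.inr (Or.inr hn)), fun hc => hno (mem_triple.mp hc)⟩
      rw [← h] at hmem
      exact hmem.2 (mem_triple.mpr hh)
    · intro hh
      by_contra hno
      have hmem : n ∈ L m u \ {a, b, x} :=
        ⟨memL.mpr (Or.inr (Or.inr hn)), fun hc => hno (mem_triple.mp hc)⟩
      rw [h] at hmem
      exact hmem.2 (mem_triple.mpr hh)
  have e1 := (key a (by omega)).mp (Or.inl rfl)
  have e2 := (key b (by omega)).mp (Or.inr (Or.inl rfl))
  have e3 := (key x (by omega)).mp (Or.inr (Or.inr rfl))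
  have e4 := (key a' (by omega)).mpr (Or.inl rfl)
  have e5 := (key b' (by omega)).mpr (Or.inr (Or.inl rfl))
  have e6 := (key x' (by omega)).mpr (Or.inr (Or.inr rfl))
  unfold Hit at e1 e2 e3 e4 e5 e6
  simp only [Prod.ext_iff]
  refine ⟨by omega, by omega, by omega⟩

def Ifin (m u : ℕ) : Finset ℕ := (Finset.Ico (m + u) (2 * m + u)).erase (2 * m)

def Xfin (m u : ℕ) : Finset ℕ := (Finset.Ico (2 * m + u) (2 * m + 2 * u)).erase (3 * m)

lemma mem_Ifin {m u t : ℕ} : t ∈ Ifin m u ↔ InI m u t := by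
  simp only [Ifin, Finset.mem_erase, Finset.mem_Ico, InI]
  omega

lemma card_Ifin {m u : ℕ} (hu : 1 < u) (hum : u ≤ m) : (Ifin m u).card = m - 1 := by
  rw [Ifin, Finset.card_erase_of_mem (by simp only [Finset.mem_Ico]; omega), Nat.card_Ico]
  omega

lemma mem_Xfin {m u t : ℕ} : t ∈ Xfin m u ↔ 2*m+u ≤ t ∧ t < 2*m+2*u ∧ t ≠ 3*m := by
  simp only [Xfin, Finset.mem_erase, Finset.mem_Ico]
  omega

lemma card_Xfin {m u : ℕ} (hu : 1 < u) (hum : u ≤ m) :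
    (Xfin m u).card = u - (if m < 2 * u then 1 else 0) := by
  by_cases hm : m < 2 * u
  · rw [if_pos hm, Xfin, Finset.card_erase_of_mem (by simp only [Finset.mem_Ico]; omega),
      Nat.card_Ico]
    omega
  · rw [if_neg hm, Xfin, Finset.erase_eq_of_notMem (by simp only [Finset.mem_Ico]; omega),
      Nat.card_Ico]
    omega

-- the families as sets of triples
def S0 (m u : ℕ) : Set (ℕ×ℕ×ℕ) :=
  {t | InI m u t.1 ∧ InI m u t.2.1 ∧ InI m u t.2.2 ∧ t.1 < t.2.1 ∧ t.2.1 < t.2.2}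

def S1 (m u : ℕ) : Set (ℕ×ℕ×ℕ) :=
  {t | ∃ X : ℕ, 2*m+u ≤ X ∧ X < 2*m+2*u ∧ X ≠ 3*m ∧ t.2.2 = X ∧ t.1 < t.2.1 ∧
    ((t.2.1 = X - m ∧ InI m u t.1) ∨ (t.1 = X - m ∧ InI m u t.2.1))}

def S2 (m u : ℕ) : Set (ℕ×ℕ×ℕ) :=
  {t | (u < m ∧ 2*u ≠ m) ∧ t.1 = m+u ∧ t.2.1 = m+2*u ∧ t.2.2 = 2*m+2*u}

def S3 (m u : ℕ) : Set (ℕ×ℕ×ℕ) :=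
  {t | (u+1 < m ∧ 2*u+1 ≠ m) ∧ (t.1 = m+u ∨ t.1 = m+u+1) ∧ t.2.1 = m+2*u+1 ∧ t.2.2 = 2*m+2*u+1}

def S4 (m u : ℕ) : Set (ℕ×ℕ×ℕ) :=
  {t | u+1 = m ∧ t.1 = m+u ∧ t.2.1 = 2*m+u ∧ t.2.2 = 3*m+u}

def S5 (m u : ℕ) : Set (ℕ×ℕ×ℕ) :=
  {t | u = m ∧ t.1 = 2*m+1 ∧ t.2.1 = 3*m+1 ∧ t.2.2 = 4*m+1}

lemma vset_eq_union {m u : ℕ} (hu : 1 < u) (hum : u ≤ m) :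
    VSet m u = S0 m u ∪ (S1 m u ∪ (S2 m u ∪ (S3 m u ∪ (S4 m u ∪ S5 m u)))) := by
  ext ⟨a, b, x⟩
  simp only [VSet, S0, S1, S2, S3, S4, S5, Set.mem_setOf_eq, Set.mem_union]
  exact classify hu hum a b x

def F0fin (m u : ℕ) : Finset (ℕ×ℕ×ℕ) :=
  (Ifin m u ×ˢ Ifin m u ×ˢ Ifin m u).filter fun t => t.1 < t.2.1 ∧ t.2.1 < t.2.2

lemma S0_eq (m u : ℕ) : S0 m u = ↑(F0fin m u) := by
  ext ⟨a, b, x⟩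
  simp only [S0, Set.mem_setOf_eq, F0fin, Finset.coe_filter, Finset.mem_product, mem_Ifin]
  tauto

lemma ncard_S0 {m u : ℕ} (hu : 1 < u) (hum : u ≤ m) : (S0 m u).ncard = Nat.choose (m-1) 3 := by
  rw [S0_eq, Set.ncard_coe_finset, F0fin, card_sorted_triples, card_Ifin hu hum]

def Pfin (m u : ℕ) : Finset (ℕ×ℕ) := (Xfin m u ×ˢ Ifin m u).filter fun p => p.2 ≠ p.1 - m

lemma mem_Pfin {m u X y : ℕ} :
    (X, y) ∈ Pfin m u ↔ (X ∈ Xfin m u ∧ y ∈ Ifin m u) ∧ y ≠ X - m := by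
  simp [Pfin, Finset.mem_filter, Finset.mem_product]

lemma mem_S1' {m u a b x : ℕ} : ((a, b, x) : ℕ×ℕ×ℕ) ∈ S1 m u ↔
    (∃ X : ℕ, 2*m+u ≤ X ∧ X < 2*m+2*u ∧ X ≠ 3*m ∧ x = X ∧ a < b ∧
      ((b = X - m ∧ InI m u a) ∨ (a = X - m ∧ InI m u b))) := Iff.rfl

lemma S1_eq {m u : ℕ} (hu : 1 < u) (hum : u ≤ m) :
    S1 m u = (fun p : ℕ×ℕ => (min p.2 (p.1 - m), max p.2 (p.1 - m), p.1)) '' ↑(Pfin m u) := by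
  ext ⟨a, b, x⟩
  rw [mem_S1']
  simp only [Set.mem_image, Finset.mem_coe]
  constructor
  · rintro ⟨X, h1, h2, h3, rfl, hab, hcase⟩
    rcases hcase with ⟨hb, hia⟩ | ⟨haX, hib⟩
    · obtain ⟨i1, i2, i3⟩ := hia
      refine ⟨(x, a), mem_Pfin.mpr ⟨⟨mem_Xfin.mpr ⟨h1, h2, h3⟩, mem_Ifin.mpr ⟨i1, i2, i3⟩⟩,
        by omega⟩, ?_⟩
      have hmin : min a (x - m) = a := min_eq_left (by omega)
      have hmax : max a (x - m) = b := by rw [max_eq_right (by omega : a ≤ x - m)]; omega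
      show (min a (x - m), max a (x - m), x) = (a, b, x)
      rw [hmin, hmax]
    · obtain ⟨i1, i2, i3⟩ := hib
      refine ⟨(x, b), mem_Pfin.mpr ⟨⟨mem_Xfin.mpr ⟨h1, h2, h3⟩, mem_Ifin.mpr ⟨i1, i2, i3⟩⟩,
        by omega⟩, ?_⟩
      have hmin : min b (x - m) = a := by rw [min_eq_right (by omega : x - m ≤ b)]; omega
      have hmax : max b (x - m) = b := max_eq_left (by omega)
      show (min b (x - m), max b (x - m), x) = (a, b, x)
      rw [hmin, hmax]
  · rintro ⟨⟨X, y⟩, hP, heq⟩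
    obtain ⟨⟨hX, hy⟩, hne⟩ := mem_Pfin.mp hP
    obtain ⟨hx1, hx2, hx3⟩ := mem_Xfin.mp hX
    obtain ⟨i1, i2, i3⟩ := mem_Ifin.mp hy
    obtain ⟨e1, e2, e3⟩ : min y (X - m) = a ∧ max y (X - m) = b ∧ X = x := by
      simpa [Prod.ext_iff] using heq
    refine ⟨X, hx1, hx2, hx3, by omega, by omega, ?_⟩
    rcases (show y < X - m ∨ X - m < y by omega) with hlt | hlt
    · exact Or.inl ⟨by omega, ⟨by omega, by omega, by omega⟩⟩
    · exact Or.inr ⟨by omega, ⟨by omega, by omega, by omega⟩⟩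

lemma ncard_S1 {m u : ℕ} (hu : 1 < u) (hum : u ≤ m) :
    (S1 m u).ncard = (u - (if m < 2 * u then 1 else 0)) * (m - 2) := by
  rw [S1_eq hu hum]
  rw [Set.ncard_image_of_injOn ?inj]
  case inj =>
    rintro ⟨X, y⟩ hXy ⟨X', y'⟩ hXy' heq
    simp only [Finset.mem_coe, Pfin, Finset.mem_filter, Finset.mem_product] at hXy hXy'
    simp only [Prod.ext_iff] at heq ⊢
    obtain ⟨e1, e2, e3⟩ := heq
    have hne := hXy.2
    have hne' := hXy'.2
    omega
  rw [Set.ncard_coe_finset]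
  have himg : (Xfin m u).image (fun X => (X, X - m)) ⊆ Xfin m u ×ˢ Ifin m u := by
    intro p hp
    simp only [Finset.mem_image] at hp
    obtain ⟨X, hX, rfl⟩ := hp
    rw [mem_Xfin] at hX
    simp only [Finset.mem_product, mem_Xfin, mem_Ifin, InI]
    exact ⟨by omega, by omega, by omega, by omega⟩
  have hPeq : Pfin m u = (Xfin m u ×ˢ Ifin m u) \ (Xfin m u).image (fun X => (X, X - m)) := by
    ext ⟨X, y⟩
    simp only [Pfin, Finset.mem_filter, Finset.mem_sdiff, Finset.mem_product, Finset.mem_image,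
      Prod.mk.injEq]
    constructor
    · rintro ⟨⟨hX, hy⟩, hne⟩
      exact ⟨⟨hX, hy⟩, by rintro ⟨X', hX', rfl, rfl⟩; exact hne rfl⟩
    · rintro ⟨⟨hX, hy⟩, hno⟩
      refine ⟨⟨hX, hy⟩, fun hc => hno ⟨X, hX, rfl, hc.symm⟩⟩
  rw [hPeq, Finset.card_sdiff_of_subset himg, Finset.card_product,
    Finset.card_image_of_injective _ (fun X X' h => (Prod.mk.injEq _ _ _ _).mp h |>.1),
    card_Ifin hu hum, card_Xfin hu hum]
  have hm1 : m - 1 = (m - 2) + 1 := by omega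
  rw [hm1, Nat.mul_add, Nat.mul_one, Nat.add_sub_cancel]

lemma ncard_S2 {m u : ℕ} :
    (S2 m u).ncard = if u < m ∧ 2*u ≠ m then 1 else 0 := by
  by_cases hc : u < m ∧ 2*u ≠ m
  · rw [if_pos hc]
    have : S2 m u = {(m+u, m+2*u, 2*m+2*u)} := by
      ext ⟨a, b, x⟩
      simp only [S2, Set.mem_setOf_eq, Set.mem_singleton_iff, Prod.ext_iff]
      tauto
    rw [this, Set.ncard_singleton]
  · rw [if_neg hc]
    have : S2 m u = ∅ := by
      ext t; simp only [S2, Set.mem_setOf_eq, Set.mem_empty_iff_false, iff_false]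
      tauto
    rw [this, Set.ncard_empty]

lemma ncard_S3 {m u : ℕ} :
    (S3 m u).ncard = if u+1 < m ∧ 2*u+1 ≠ m then 2 else 0 := by
  by_cases hc : u+1 < m ∧ 2*u+1 ≠ m
  · rw [if_pos hc]
    have : S3 m u = {(m+u, m+2*u+1, 2*m+2*u+1), (m+u+1, m+2*u+1, 2*m+2*u+1)} := by
      ext ⟨a, b, x⟩
      simp only [S3, Set.mem_setOf_eq, Set.mem_insert_iff, Set.mem_singleton_iff, Prod.ext_iff]
      tauto
    rw [this, Set.ncard_pair (by simp only [ne_eq, Prod.ext_iff]; omega)]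
  · rw [if_neg hc]
    have : S3 m u = ∅ := by
      ext t; simp only [S3, Set.mem_setOf_eq, Set.mem_empty_iff_false, iff_false]
      tauto
    rw [this, Set.ncard_empty]

lemma ncard_S4 {m u : ℕ} :
    (S4 m u).ncard = if u+1 = m then 1 else 0 := by
  by_cases hc : u+1 = m
  · rw [if_pos hc]
    have : S4 m u = {(m+u, 2*m+u, 3*m+u)} := by
      ext ⟨a, b, x⟩
      simp only [S4, Set.mem_setOf_eq, Set.mem_singleton_iff, Prod.ext_iff]
      tauto
    rw [this, Set.ncard_singleton]
  · rw [if_neg hc]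
    have : S4 m u = ∅ := by
      ext t; simp only [S4, Set.mem_setOf_eq, Set.mem_empty_iff_false, iff_false]
      tauto
    rw [this, Set.ncard_empty]

lemma ncard_S5 {m u : ℕ} :
    (S5 m u).ncard = if u = m then 1 else 0 := by
  by_cases hc : u = m
  · rw [if_pos hc]
    have : S5 m u = {(2*m+1, 3*m+1, 4*m+1)} := by
      ext ⟨a, b, x⟩
      simp only [S5, Set.mem_setOf_eq, Set.mem_singleton_iff, Prod.ext_iff]
      tauto
    rw [this, Set.ncard_singleton]
  · rw [if_neg hc]
    have : S5 m u = ∅ := by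
      ext t; simp only [S5, Set.mem_setOf_eq, Set.mem_empty_iff_false, iff_false]
      tauto
    rw [this, Set.ncard_empty]



lemma mem_S0' {m u a b x : ℕ} : ((a,b,x) : ℕ×ℕ×ℕ) ∈ S0 m u ↔
    (InI m u a ∧ InI m u b ∧ InI m u x ∧ a < b ∧ b < x) := Iff.rfl

lemma mem_S2' {m u a b x : ℕ} : ((a,b,x) : ℕ×ℕ×ℕ) ∈ S2 m u ↔
    ((u < m ∧ 2*u ≠ m) ∧ a = m+u ∧ b = m+2*u ∧ x = 2*m+2*u) := Iff.rfl

lemma mem_S3' {m u a b x : ℕ} : ((a,b,x) : ℕ×ℕ×ℕ) ∈ S3 m u ↔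
    ((u+1 < m ∧ 2*u+1 ≠ m) ∧ (a = m+u ∨ a = m+u+1) ∧ b = m+2*u+1 ∧ x = 2*m+2*u+1) := Iff.rfl

lemma mem_S4' {m u a b x : ℕ} : ((a,b,x) : ℕ×ℕ×ℕ) ∈ S4 m u ↔
    (u+1 = m ∧ a = m+u ∧ b = 2*m+u ∧ x = 3*m+u) := Iff.rfl

lemma mem_S5' {m u a b x : ℕ} : ((a,b,x) : ℕ×ℕ×ℕ) ∈ S5 m u ↔
    (u = m ∧ a = 2*m+1 ∧ b = 3*m+1 ∧ x = 4*m+1) := Iff.rfl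

lemma S0_x {m u a b x : ℕ} (h : ((a,b,x) : ℕ×ℕ×ℕ) ∈ S0 m u) : x < 2*m+u :=
  (mem_S0'.mp h).2.2.1.2.1

lemma S1_x {m u a b x : ℕ} (h : ((a,b,x) : ℕ×ℕ×ℕ) ∈ S1 m u) :
    2*m+u ≤ x ∧ x < 2*m+2*u := by
  obtain ⟨X, h1, h2, h3, hx, -⟩ := mem_S1'.mp h
  omega

lemma S2_x {m u a b x : ℕ} (h : ((a,b,x) : ℕ×ℕ×ℕ) ∈ S2 m u) :
    u < m ∧ x = 2*m+2*u := ⟨(mem_S2'.mp h).1.1, (mem_S2'.mp h).2.2.2⟩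

lemma S3_x {m u a b x : ℕ} (h : ((a,b,x) : ℕ×ℕ×ℕ) ∈ S3 m u) :
    u+1 < m ∧ x = 2*m+2*u+1 := ⟨(mem_S3'.mp h).1.1, (mem_S3'.mp h).2.2.2⟩

lemma S4_x {m u a b x : ℕ} (h : ((a,b,x) : ℕ×ℕ×ℕ) ∈ S4 m u) :
    u+1 = m ∧ x = 3*m+u := ⟨(mem_S4'.mp h).1, (mem_S4'.mp h).2.2.2⟩

lemma S5_x {m u a b x : ℕ} (h : ((a,b,x) : ℕ×ℕ×ℕ) ∈ S5 m u) :
    u = m ∧ x = 4*m+1 := ⟨(mem_S5'.mp h).1, (mem_S5'.mp h).2.2.2⟩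

lemma fin_S0 {m u : ℕ} : (S0 m u).Finite := by
  rw [S0_eq]; exact Finset.finite_toSet _

lemma fin_S1 {m u : ℕ} (hu : 1 < u) (hum : u ≤ m) : (S1 m u).Finite := by
  rw [S1_eq hu hum]; exact Set.Finite.image _ (Finset.finite_toSet _)

lemma fin_S2 {m u : ℕ} : (S2 m u).Finite := by
  apply Set.Finite.subset (Set.finite_singleton ((m+u, m+2*u, 2*m+2*u) : ℕ×ℕ×ℕ))
  rintro ⟨a, b, x⟩ h
  obtain ⟨-, h1, h2, h3⟩ := mem_S2'.mp h
  simp only [Set.mem_singleton_iff, Prod.ext_iff]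
  exact ⟨h1, h2, h3⟩

lemma fin_S3 {m u : ℕ} : (S3 m u).Finite := by
  apply Set.Finite.subset (((Set.finite_singleton ((m+u+1, m+2*u+1, 2*m+2*u+1) : ℕ×ℕ×ℕ)).insert
    ((m+u, m+2*u+1, 2*m+2*u+1) : ℕ×ℕ×ℕ)))
  rintro ⟨a, b, x⟩ h
  obtain ⟨-, h1, h2, h3⟩ := mem_S3'.mp h
  simp only [Set.mem_insert_iff, Set.mem_singleton_iff, Prod.ext_iff]
  tauto

lemma fin_S4 {m u : ℕ} : (S4 m u).Finite := by
  apply Set.Finite.subset (Set.finite_singleton ((m+u, 2*m+u, 3*m+u) : ℕ×ℕ×ℕ))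
  rintro ⟨a, b, x⟩ h
  obtain ⟨-, h1, h2, h3⟩ := mem_S4'.mp h
  simp only [Set.mem_singleton_iff, Prod.ext_iff]
  exact ⟨h1, h2, h3⟩

lemma fin_S5 {m u : ℕ} : (S5 m u).Finite := by
  apply Set.Finite.subset (Set.finite_singleton ((2*m+1, 3*m+1, 4*m+1) : ℕ×ℕ×ℕ))
  rintro ⟨a, b, x⟩ h
  obtain ⟨-, h1, h2, h3⟩ := mem_S5'.mp h
  simp only [Set.mem_singleton_iff, Prod.ext_iff]
  exact ⟨h1, h2, h3⟩

lemma vset_ncard {m u : ℕ} (hu : 1 < u) (hum : u ≤ m) :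
    (VSet m u).ncard = Nat.choose (m - 1) 3 +
      ((u - (if m < 2 * u then 1 else 0)) * (m - 2) +
      ((if u < m ∧ 2*u ≠ m then 1 else 0) +
      ((if u+1 < m ∧ 2*u+1 ≠ m then 2 else 0) +
      ((if u+1 = m then 1 else 0) + (if u = m then 1 else 0))))) := by
  have d0 : Disjoint (S0 m u) (S1 m u ∪ (S2 m u ∪ (S3 m u ∪ (S4 m u ∪ S5 m u)))) := by
    rw [Set.disjoint_left]
    rintro ⟨a, b, x⟩ h0 hrest
    have f0 := S0_x h0
    rcases hrest with h | h | h | h | h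
    · have := S1_x h; omega
    · have := S2_x h; omega
    · have := S3_x h; omega
    · have := S4_x h; omega
    · have := S5_x h; omega
  have d1 : Disjoint (S1 m u) (S2 m u ∪ (S3 m u ∪ (S4 m u ∪ S5 m u))) := by
    rw [Set.disjoint_left]
    rintro ⟨a, b, x⟩ h1 hrest
    have f1 := S1_x h1
    rcases hrest with h | h | h | h
    · have := S2_x h; omega
    · have := S3_x h; omega
    · have := S4_x h; omega
    · have := S5_x h; omega
  have d2 : Disjoint (S2 m u) (S3 m u ∪ (S4 m u ∪ S5 m u)) := by
    rw [Set.disjoint_left]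
    rintro ⟨a, b, x⟩ h2 hrest
    have f2 := S2_x h2
    rcases hrest with h | h | h
    · have := S3_x h; omega
    · have := S4_x h; omega
    · have := S5_x h; omega
  have d3 : Disjoint (S3 m u) (S4 m u ∪ S5 m u) := by
    rw [Set.disjoint_left]
    rintro ⟨a, b, x⟩ h3 hrest
    have f3 := S3_x h3
    rcases hrest with h | h
    · have := S4_x h; omega
    · have := S5_x h; omega
  have d4 : Disjoint (S4 m u) (S5 m u) := by
    rw [Set.disjoint_left]
    rintro ⟨a, b, x⟩ h4 h5
    have := S4_x h4
    have := S5_x h5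
    omega
  rw [vset_eq_union hu hum,
    Set.ncard_union_eq d0 fin_S0 ((fin_S1 hu hum).union (fin_S2.union (fin_S3.union
      (fin_S4.union fin_S5)))),
    Set.ncard_union_eq d1 (fin_S1 hu hum) (fin_S2.union (fin_S3.union (fin_S4.union fin_S5))),
    Set.ncard_union_eq d2 fin_S2 (fin_S3.union (fin_S4.union fin_S5)),
    Set.ncard_union_eq d3 fin_S3 (fin_S4.union fin_S5),
    Set.ncard_union_eq d4 fin_S4 fin_S5,
    ncard_S0 hu hum, ncard_S1 hu hum, ncard_S2, ncard_S3, ncard_S4, ncard_S5]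

end S12

theorem statement12 (m u : ℕ) (hu : 1 < u) (hum : u ≤ m) :
    {T : Set ℕ | IsGreatGrandchild T (({0, m} : Set ℕ) ∪ {n : ℕ | m + u ≤ n})}.ncard =
      Nat.choose (m - 1) 3 +
      (u - (if m < 2 * u then 1 else 0)) * (m - 2) +
      (if u = m ∨ 2 * u ≠ m then 1 else 0) +
      2 * (if u < m - 1 ∧ 2 * u + 1 ≠ m then 1 else 0) +
      (if u = m - 1 then 1 else 0) := by
  have hL : (({0, m} : Set ℕ) ∪ {n : ℕ | m + u ≤ n}) = S12.L m u := rfl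
  rw [hL, S12.ggc_set_eq hu hum, Set.ncard_image_of_injOn (S12.psi_injOn hu hum),
    S12.vset_ncard hu hum]
  generalize Nat.choose (m - 1) 3 = C
  generalize (u - (if m < 2 * u then 1 else 0)) * (m - 2) = P
  split_ifs <;> omega
end

section
/- Let Λ be a numerical semigroup of rank k(Λ) ≥ 3, with conductor c = c(Λ), multiplicity m = m(Λ), jumps u = λ_2 − λ_1 and v = λ_3 − λ_2, r right generators and σ strong generators. Let X be the number of integers i with 0 ≤ i < v such that none of c+i, c+i+u and c+i+u+m is the sum of two left elements of Λ. Then Λ has exactly C(r,3) + σ(r−1) + X great-grandchildren, where C(r,3) = r(r−1)(r−2)/6. -/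
/-!
Removing a right generator only removes an element `≥ c`, so a great-grandchild of `S` is
`S ∖ {a, b, x}` for a unique chain `a < b < x`, and it suffices to count the chains. The right
generators of a child `S ∖ {a}` are those of `S` beyond `a`, together with `a + m` when `a` is
strong. Iterating once more, a chain is either three right generators of `S`, or a strong `μ`,
another right generator and `μ + m`, or `a < b < b + m` where `b + m` is a minimal generator of
`S ∖ {a, b}` but `b` is weak (or `b = a + m`). In that last case the splittings
`λ₂ + (b + m - λ₂)` and `λ₃ + (a - v)` would avoid `a` and `b` unless `b = a + u` and `a < c + v`;
conversely, for `i < v` the triple `c + i, c + i + u, c + i + u + m` is a chain as soon as none of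
its entries is a sum of two left elements, since below `c + λ₃` an element `≥ c` can only be
completed by `m` or `λ₂`. The three kinds of chains contribute `C(r, 3)`, `σ (r - 1)` and `X`.
-/

lemma sgConductor_eq_of_forall {S : Set ℕ} {M : ℕ} (hM : M ∉ S) (h : ∀ n, M < n → n ∈ S) :
    sgConductor S = M + 1 := by
  have hmem : M + 1 ∈ {N : ℕ | ∀ n : ℕ, N ≤ n → n ∈ S} := fun n hn => h n hn
  refine le_antisymm (Nat.sInf_le hmem) (Nat.succ_le_of_lt ?_)
  by_contra! hle
  exact hM (Nat.sInf_mem ⟨_, hmem⟩ M hle)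

lemma sgMultiplicity_le {S : Set ℕ} {x : ℕ} (hx : x ∈ S) (hx0 : x ≠ 0) :
    sgMultiplicity S ≤ x :=
  Nat.sInf_le ⟨hx, hx0⟩

lemma IsRightGenerator.sgConductor_le {S : Set ℕ} {μ : ℕ} (hμ : IsRightGenerator S μ) :
    sgConductor S ≤ μ := by
  have := hμ.2
  unfold sgFrobenius at this
  omega

lemma IsMinimalGenerator.mono {S T : Set ℕ} {x : ℕ} (hx : IsMinimalGenerator S x) (hTS : T ⊆ S)
    (hxT : x ∈ T) : IsMinimalGenerator T x :=
  ⟨hxT, hx.2.1, fun ⟨p, hp, q, hq, hp0, hq0, hpq⟩ => hx.2.2 ⟨p, hTS hp, q, hTS hq, hp0, hq0, hpq⟩⟩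

lemma exists_sgElem_eq {S : Set ℕ} {x : ℕ} (hx : x ∈ S) : ∃ k, sgElem S k = x := by
  classical
  exact ⟨_, Nat.nth_count hx⟩

def IsLeftSum (S : Set ℕ) (x : ℕ) : Prop :=
  ∃ a ∈ sgLeftElements S, ∃ b ∈ sgLeftElements S, a + b = x

lemma IsMinimalGenerator.not_isLeftSum {S T : Set ℕ} {y : ℕ} (hy : IsMinimalGenerator T y)
    (hST : ∀ x ∈ S, x < sgConductor S → x ∈ T) (hcy : sgConductor S ≤ y) :
    ¬ IsLeftSum S y := by
  rintro ⟨p, ⟨hp, hpc⟩, q, ⟨hq, hqc⟩, hpq⟩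
  exact hy.2.2 ⟨p, hST p hp (by omega), q, hST q hq (by omega), by omega, by omega, hpq⟩

namespace IsNumericalSemigroup

variable {S : Set ℕ}

lemma mem_of_sgConductor_le (hS : IsNumericalSemigroup S) {n : ℕ} (hn : sgConductor S ≤ n) :
    n ∈ S := by
  obtain ⟨N, hN⟩ := hS.2.2
  exact Nat.sInf_mem (s := {N : ℕ | ∀ n : ℕ, N ≤ n → n ∈ S}) ⟨N, hN⟩ n hn

lemma sgFrobenius_notMem (hS : IsNumericalSemigroup S) (hc : sgConductor S ≠ 0) :
    sgFrobenius S ∉ S := by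
  intro hF
  have : sgConductor S ≤ sgFrobenius S := Nat.sInf_le fun n hn => by
    rcases hn.eq_or_lt with rfl | hlt
    · exact hF
    · exact hS.mem_of_sgConductor_le (by unfold sgFrobenius at hlt; omega)
  unfold sgFrobenius at this
  omega

lemma sgMultiplicity_spec (hS : IsNumericalSemigroup S) :
    sgMultiplicity S ∈ S ∧ sgMultiplicity S ≠ 0 :=
  Nat.sInf_mem (s := {n | n ∈ S ∧ n ≠ 0})
    ⟨sgConductor S + 1, hS.mem_of_sgConductor_le (Nat.le_succ _), Nat.succ_ne_zero _⟩

lemma mem_sgLeftElements (hS : IsNumericalSemigroup S) {x : ℕ} (hx : x ∈ S)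
    (hxc : x < sgConductor S) : x ∈ sgLeftElements S := by
  refine ⟨hx, ?_⟩
  have hF : x ≠ sgFrobenius S := fun h => hS.sgFrobenius_notMem (by omega) (h ▸ hx)
  unfold sgFrobenius at hF
  omega

theorem isRightGenerator_iff (hS : IsNumericalSemigroup S)
    (hmc : sgMultiplicity S < sgConductor S) {x : ℕ} :
    IsRightGenerator S x ↔
      sgConductor S ≤ x ∧ x < sgConductor S + sgMultiplicity S ∧ ¬ IsLeftSum S x := by
  obtain ⟨hm, hm0⟩ := hS.sgMultiplicity_spec
  constructor
  · intro hx
    have hcx := hx.sgConductor_le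
    refine ⟨hcx, ?_, hx.1.not_isLeftSum (fun _ h _ => h) hcx⟩
    by_contra! hle
    exact hx.1.2.2 ⟨_, hm, x - sgMultiplicity S,
      hS.mem_of_sgConductor_le (by omega), hm0, by omega, by omega⟩
  · rintro ⟨hcx, hxm, hleft⟩
    refine ⟨⟨hS.mem_of_sgConductor_le hcx, by omega, ?_⟩, by unfold sgFrobenius; omega⟩
    rintro ⟨p, hp, q, hq, hp0, hq0, hpq⟩
    have hpm := sgMultiplicity_le hp hp0
    have hqm := sgMultiplicity_le hq hq0
    exact hleft ⟨p, hS.mem_sgLeftElements hp (by omega), q,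
      hS.mem_sgLeftElements hq (by omega), hpq⟩

lemma diff_singleton (hS : IsNumericalSemigroup S) {a : ℕ} (ha : IsMinimalGenerator S a) :
    IsNumericalSemigroup (S \ {a}) := by
  obtain ⟨h0, hadd, N, hN⟩ := hS
  refine ⟨⟨h0, (ha.2.1 ·.symm)⟩, fun p ⟨hp, hpa⟩ q ⟨hq, hqa⟩ => ⟨hadd p hp q hq, ?_⟩,
    N + a + 1, fun n hn => ⟨hN n (by omega), by simp; omega⟩⟩
  rintro hpq
  rw [Set.mem_singleton_iff] at hpa hqa hpq
  exact ha.2.2 ⟨p, hp, q, hq, by rintro rfl; simp_all, by rintro rfl; simp_all, hpq⟩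

lemma sgFrobenius_diff_singleton (hS : IsNumericalSemigroup S) {a : ℕ}
    (ha : sgConductor S ≤ a) : sgFrobenius (S \ {a}) = a := by
  have hc : sgConductor (S \ {a}) = a + 1 := sgConductor_eq_of_forall (by simp)
    fun n hn => ⟨hS.mem_of_sgConductor_le (by omega), by simp; omega⟩
  rw [sgFrobenius, hc, Nat.add_sub_cancel]

lemma sgMultiplicity_diff_singleton (hS : IsNumericalSemigroup S) {a : ℕ}
    (ha : a ≠ sgMultiplicity S) : sgMultiplicity (S \ {a}) = sgMultiplicity S := by
  obtain ⟨hm, hm0⟩ := hS.sgMultiplicity_spec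
  have hmem : sgMultiplicity S ∈ S \ {a} := ⟨hm, Ne.symm ha⟩
  refine le_antisymm (sgMultiplicity_le hmem hm0) ?_
  obtain ⟨⟨hx, -⟩, hx0⟩ := Nat.sInf_mem (s := {n | n ∈ S \ {a} ∧ n ≠ 0}) ⟨_, hmem, hm0⟩
  exact sgMultiplicity_le hx hx0

/-! ### Right generators of children and grandchildren -/

theorem isRightGenerator_diff_singleton_iff (hS : IsNumericalSemigroup S)
    (hmc : sgMultiplicity S < sgConductor S) {a b : ℕ} (ha : IsRightGenerator S a) :
    IsRightGenerator (S \ {a}) b ↔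
      (IsRightGenerator S b ∧ a < b) ∨ (b = a + sgMultiplicity S ∧ IsStrongGenerator S a) := by
  have hca := ha.sgConductor_le
  obtain ⟨hm, hm0⟩ := hS.sgMultiplicity_spec
  constructor
  · intro hb
    have hab : a < b := hS.sgFrobenius_diff_singleton hca ▸ hb.2
    by_cases hbS : IsMinimalGenerator S b
    · exact Or.inl ⟨⟨hbS, by unfold sgFrobenius; omega⟩, hab⟩
    right
    -- a decomposition of `b` in `S` must use `a`, and the other summand can only be `m`
    obtain ⟨p, hp, q, hq, hp0, hq0, hpq⟩ : ∃ p ∈ S, ∃ q ∈ S, p ≠ 0 ∧ q ≠ 0 ∧ p + q = b := by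
      by_contra h
      exact hbS ⟨hb.1.1.1, hb.1.2.1, h⟩
    have hpq_a : p = a ∨ q = a := by
      by_contra! h
      exact hb.1.2.2 ⟨p, ⟨hp, h.1⟩, q, ⟨hq, h.2⟩, hp0, hq0, hpq⟩
    obtain ⟨z, hz, hz0, rfl⟩ : ∃ z ∈ S, z ≠ 0 ∧ a + z = b := by
      rcases hpq_a with rfl | rfl
      · exact ⟨q, hq, hq0, hpq⟩
      · exact ⟨p, hp, hp0, by omega⟩
    have hzm : z = sgMultiplicity S := by
      by_contra hne
      have := sgMultiplicity_le hz hz0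
      exact hb.1.2.2 ⟨_, ⟨hm, by simp; omega⟩, a + z - sgMultiplicity S,
        ⟨hS.mem_of_sgConductor_le (by omega), by simp; omega⟩, hm0, by omega, by omega⟩
    subst hzm
    exact ⟨rfl, ha, hb.1⟩
  · rintro (⟨hb, hab⟩ | ⟨rfl, -, hmin⟩)
    · refine ⟨hb.1.mono Set.sdiff_subset ⟨hb.1.1, by simp; omega⟩, ?_⟩
      rwa [hS.sgFrobenius_diff_singleton hca]
    · refine ⟨hmin, ?_⟩
      rw [hS.sgFrobenius_diff_singleton hca]
      omega

theorem isRightGenerator_diff_diff_iff (hS : IsNumericalSemigroup S)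
    (hmc : sgMultiplicity S < sgConductor S) {a b x : ℕ} (ha : IsRightGenerator S a)
    (hb : IsRightGenerator (S \ {a}) b) :
    IsRightGenerator ((S \ {a}) \ {b}) x ↔
      (((IsRightGenerator S x ∧ a < x) ∨ (x = a + sgMultiplicity S ∧ IsStrongGenerator S a)) ∧
          b < x) ∨
        (x = b + sgMultiplicity S ∧
          IsMinimalGenerator ((S \ {a}) \ {b}) (b + sgMultiplicity S)) := by
  have hca := ha.sgConductor_le
  have hm' : sgMultiplicity (S \ {a}) = sgMultiplicity S :=
    hS.sgMultiplicity_diff_singleton (by omega)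
  have hmc' : sgMultiplicity (S \ {a}) < sgConductor (S \ {a}) := by
    have := hS.sgFrobenius_diff_singleton hca
    unfold sgFrobenius at this
    omega
  rw [(hS.diff_singleton ha.1).isRightGenerator_diff_singleton_iff hmc' hb,
    hS.isRightGenerator_diff_singleton_iff hmc ha]
  simp only [IsStrongGenerator, hm', hb, true_and]

/-! ### The first elements `λ₁ = m < λ₂ < λ₃ ≤ c` -/

lemma infinite (hS : IsNumericalSemigroup S) : {n | n ∈ S}.Infinite := by
  obtain ⟨N, hN⟩ := hS.2.2
  exact (Set.Ici_infinite N).mono hN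

lemma sgElem_strictMono (hS : IsNumericalSemigroup S) : StrictMono (sgElem S) :=
  Nat.nth_strictMono hS.infinite

lemma sgElem_mem (hS : IsNumericalSemigroup S) (j : ℕ) : sgElem S j ∈ S :=
  Nat.nth_mem_of_infinite hS.infinite j

lemma sgElem_succ_le (hS : IsNumericalSemigroup S) {j x : ℕ} (hx : x ∈ S)
    (hjx : sgElem S j < x) : sgElem S (j + 1) ≤ x := by
  obtain ⟨k, rfl⟩ := exists_sgElem_eq hx
  exact hS.sgElem_strictMono.monotone (hS.sgElem_strictMono.lt_iff_lt.mp hjx)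

lemma sgElem_zero (hS : IsNumericalSemigroup S) : sgElem S 0 = 0 :=
  Nat.nth_zero_of_zero hS.1

lemma sgElem_one (hS : IsNumericalSemigroup S) : sgElem S 1 = sgMultiplicity S := by
  obtain ⟨hm, hm0⟩ := hS.sgMultiplicity_spec
  have h01 := hS.sgElem_strictMono (show 0 < 1 by omega)
  rw [hS.sgElem_zero] at h01
  exact le_antisymm (hS.sgElem_succ_le hm (by rw [hS.sgElem_zero]; omega))
    (sgMultiplicity_le (hS.sgElem_mem 1) h01.ne')

lemma sgElem_succ_le_add_sgMultiplicity (hS : IsNumericalSemigroup S) (j : ℕ) :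
    sgElem S (j + 1) ≤ sgElem S j + sgMultiplicity S := by
  obtain ⟨hm, hm0⟩ := hS.sgMultiplicity_spec
  exact hS.sgElem_succ_le (hS.2.1 _ (hS.sgElem_mem j) _ hm) (by omega)

lemma eq_of_mem_of_lt_sgElem_three (hS : IsNumericalSemigroup S) {x : ℕ} (hx : x ∈ S)
    (h : x < sgElem S 3) : x = 0 ∨ x = sgMultiplicity S ∨ x = sgElem S 2 := by
  obtain ⟨k, rfl⟩ := exists_sgElem_eq hx
  have hk : k < 3 := hS.sgElem_strictMono.lt_iff_lt.mp h
  interval_cases k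
  · exact Or.inl hS.sgElem_zero
  · exact Or.inr (Or.inl hS.sgElem_one)
  · exact Or.inr (Or.inr rfl)

lemma sgElem_sgRank (hS : IsNumericalSemigroup S) :
    sgElem S (sgRank S) = sgConductor S := by
  classical
  set c := sgConductor S
  have hgenus : sgGenus S = ((Finset.range c).filter (· ∉ S)).card := by
    rw [sgGenus, ← Set.ncard_coe_finset]
    congr 1
    ext n
    simp only [Finset.coe_filter, Finset.mem_range, Set.mem_compl_iff, Set.mem_ofPred_eq]
    exact ⟨fun hn => ⟨by by_contra! h; exact hn (hS.mem_of_sgConductor_le h), hn⟩, And.right⟩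
  have hrank : sgRank S = Nat.count (· ∈ S) c := by
    have htot := Finset.card_filter_add_card_filter_not (s := Finset.range c) (· ∈ S)
    rw [Finset.card_range] at htot
    rw [sgRank, hgenus, Nat.count_eq_card_filter_range]
    omega
  rw [hrank]
  exact Nat.nth_count (hS.mem_of_sgConductor_le le_rfl)

lemma sgElem_le_sgConductor (hS : IsNumericalSemigroup S) {j : ℕ} (hj : j ≤ sgRank S) :
    sgElem S j ≤ sgConductor S :=
  hS.sgElem_sgRank ▸ hS.sgElem_strictMono.monotone hj

lemma sgElem_bounds (hS : IsNumericalSemigroup S) (hk : 3 ≤ sgRank S) :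
    sgElem S 1 = sgMultiplicity S ∧ sgMultiplicity S < sgElem S 2 ∧ sgElem S 2 < sgElem S 3 ∧
      sgElem S 3 ≤ sgConductor S ∧ sgElem S 2 ≤ sgElem S 1 + sgMultiplicity S ∧
      sgElem S 3 ≤ sgElem S 2 + sgMultiplicity S :=
  ⟨hS.sgElem_one, hS.sgElem_one ▸ hS.sgElem_strictMono (by norm_num),
    hS.sgElem_strictMono (by norm_num), hS.sgElem_le_sgConductor hk,
    hS.sgElem_succ_le_add_sgMultiplicity 1, hS.sgElem_succ_le_add_sgMultiplicity 2⟩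

lemma sgMultiplicity_lt_sgConductor (hS : IsNumericalSemigroup S) (hk : 3 ≤ sgRank S) :
    sgMultiplicity S < sgConductor S := by
  obtain ⟨-, h12, h23, h3c, -⟩ := hS.sgElem_bounds hk
  omega

/-! ### Chains ending in `b + m` -/

/-- Below `c + λ₃`, a sum with a summand `q ≥ c` has its other summand in `{m, λ₂}`. -/
theorem isMinimalGenerator_of_not_isLeftSum (hS : IsNumericalSemigroup S) (hk : 3 ≤ sgRank S)
    {T : Set ℕ} {y : ℕ} (hT : T ⊆ S) (hy : y ∈ T) (hcy : sgConductor S ≤ y)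
    (hy3 : y < sgConductor S + sgElem S 3) (hleft : ¬ IsLeftSum S y)
    (hm : sgConductor S ≤ y - sgMultiplicity S → y - sgMultiplicity S ∉ T)
    (h2 : sgConductor S ≤ y - sgElem S 2 → y - sgElem S 2 ∉ T) :
    IsMinimalGenerator T y := by
  obtain ⟨-, h12, h23, h3c, -⟩ := hS.sgElem_bounds hk
  have hbig : ∀ p ∈ T, ∀ q ∈ T, p ≠ 0 → p + q = y → sgConductor S ≤ q → False := by
    intro p hp q hq hp0 hpq hcq
    rcases hS.eq_of_mem_of_lt_sgElem_three (hT hp) (by omega) with rfl | rfl | rfl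
    · exact hp0 rfl
    · exact hm (by omega) (by rwa [← hpq, Nat.add_sub_cancel_left])
    · exact h2 (by omega) (by rwa [← hpq, Nat.add_sub_cancel_left])
  refine ⟨hy, by omega, ?_⟩
  rintro ⟨p, hp, q, hq, hp0, hq0, hpq⟩
  by_cases hcq : sgConductor S ≤ q
  · exact hbig p hp q hq hp0 hpq hcq
  by_cases hcp : sgConductor S ≤ p
  · exact hbig q hq p hp hq0 (by omega) hcp
  exact hleft ⟨p, hS.mem_sgLeftElements (hT hp) (by omega), q,
    hS.mem_sgLeftElements (hT hq) (by omega), hpq⟩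

lemma lt_of_isStrongGenerator (hS : IsNumericalSemigroup S) (hk : 3 ≤ sgRank S) {μ : ℕ}
    (hμ : IsStrongGenerator S μ) : μ < sgConductor S + (sgElem S 2 - sgElem S 1) := by
  obtain ⟨h1, h12, h23, h3c, -⟩ := hS.sgElem_bounds hk
  have hcμ := hμ.1.sgConductor_le
  by_contra! hle
  -- otherwise `μ + m = λ₂ + (μ - u)` avoids `μ`
  exact hμ.2.2.2 ⟨_, ⟨hS.sgElem_mem 2, by simp; omega⟩, μ - (sgElem S 2 - sgElem S 1),
    ⟨hS.mem_of_sgConductor_le (by omega), by simp; omega⟩, by omega, by omega, by omega⟩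

theorem eq_add_of_not_isStrongGenerator (hS : IsNumericalSemigroup S) (hk : 3 ≤ sgRank S)
    {a b : ℕ} (ha : IsRightGenerator S a) (hb : IsRightGenerator S b) (hab : a < b)
    (hbs : ¬ IsStrongGenerator S b)
    (hmin : IsMinimalGenerator ((S \ {a}) \ {b}) (b + sgMultiplicity S)) :
    b = a + (sgElem S 2 - sgElem S 1) ∧ a < sgConductor S + (sgElem S 3 - sgElem S 2) := by
  obtain ⟨h1, h12, h23, h3c, -⟩ := hS.sgElem_bounds hk
  have hm0 := hS.sgMultiplicity_spec.2
  have hca := ha.sgConductor_le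
  obtain ⟨p, ⟨hp, hpb⟩, q, ⟨hq, hqb⟩, hp0, hq0, hpq⟩ :
      ∃ p ∈ S \ {b}, ∃ q ∈ S \ {b}, p ≠ 0 ∧ q ≠ 0 ∧ p + q = b + sgMultiplicity S := by
    by_contra h
    exact hbs ⟨hb, ⟨hS.mem_of_sgConductor_le (by omega), by simp; omega⟩, by omega, h⟩
  -- minimality in `S ∖ {a, b}` forces the splitting `b + m = a + z`, so `z ≥ λ₂`
  have hpq_a : p = a ∨ q = a := by
    by_contra! h
    exact hmin.2.2 ⟨p, ⟨⟨hp, h.1⟩, hpb⟩, q, ⟨⟨hq, h.2⟩, hqb⟩, hp0, hq0, hpq⟩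
  obtain ⟨z, hz, hz0, hbz⟩ : ∃ z ∈ S, z ≠ 0 ∧ b + sgMultiplicity S = a + z := by
    rcases hpq_a with rfl | rfl
    · exact ⟨q, hq, hq0, hpq.symm⟩
    · exact ⟨p, hp, hp0, by omega⟩
  have hz2 : sgElem S 2 ≤ z := hS.sgElem_succ_le (j := 1) hz (by omega)
  have hbu : b = a + (sgElem S 2 - sgElem S 1) := by
    by_contra hne
    exact hmin.2.2 ⟨_, ⟨⟨hS.sgElem_mem 2, by simp; omega⟩, by simp; omega⟩,
      b + sgMultiplicity S - sgElem S 2,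
      ⟨⟨hS.mem_of_sgConductor_le (by omega), by simp; omega⟩, by simp; omega⟩,
      by omega, by omega, by omega⟩
  refine ⟨hbu, ?_⟩
  by_contra! hle
  exact hmin.2.2 ⟨_, ⟨⟨hS.sgElem_mem 3, by simp; omega⟩, by simp; omega⟩,
    a - (sgElem S 3 - sgElem S 2),
    ⟨⟨hS.mem_of_sgConductor_le (by omega), by simp; omega⟩, by simp; omega⟩,
    by omega, by omega, by omega⟩

theorem eq_multiplicity_of_isMinimalGenerator (hS : IsNumericalSemigroup S)
    (hk : 3 ≤ sgRank S) {a : ℕ} (ha : IsRightGenerator S a)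
    (hmin : IsMinimalGenerator ((S \ {a}) \ {a + sgMultiplicity S})
      (a + sgMultiplicity S + sgMultiplicity S)) :
    sgElem S 2 - sgElem S 1 = sgMultiplicity S ∧
      a < sgConductor S + (sgElem S 3 - sgElem S 2) := by
  obtain ⟨h1, h12, h23, h3c, hu, -⟩ := hS.sgElem_bounds hk
  have hca := ha.sgConductor_le
  have hum : sgElem S 2 - sgElem S 1 = sgMultiplicity S := by
    by_contra hne
    exact hmin.2.2 ⟨_, ⟨⟨hS.sgElem_mem 2, by simp; omega⟩, by simp; omega⟩,
      a + sgMultiplicity S + sgMultiplicity S - sgElem S 2,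
      ⟨⟨hS.mem_of_sgConductor_le (by omega), by simp; omega⟩, by simp; omega⟩,
      by omega, by omega, by omega⟩
  refine ⟨hum, ?_⟩
  by_contra! hle
  exact hmin.2.2 ⟨_, ⟨⟨hS.sgElem_mem 3, by simp; omega⟩, by simp; omega⟩,
    a - (sgElem S 3 - sgElem S 2),
    ⟨⟨hS.mem_of_sgConductor_le (by omega), by simp; omega⟩, by simp; omega⟩,
    by omega, by omega, by omega⟩

theorem isRightGenerator_chain_of_not_isLeftSum (hS : IsNumericalSemigroup S)
    (hk : 3 ≤ sgRank S) {i : ℕ} (hi : i < sgElem S 3 - sgElem S 2)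
    (h₀ : ¬ IsLeftSum S (sgConductor S + i))
    (h₁ : ¬ IsLeftSum S (sgConductor S + i + (sgElem S 2 - sgElem S 1)))
    (h₂ : ¬ IsLeftSum S (sgConductor S + i + (sgElem S 2 - sgElem S 1) + sgMultiplicity S)) :
    IsRightGenerator S (sgConductor S + i) ∧
      IsRightGenerator (S \ {sgConductor S + i}) (sgConductor S + i + (sgElem S 2 - sgElem S 1)) ∧
      IsRightGenerator ((S \ {sgConductor S + i}) \ {sgConductor S + i + (sgElem S 2 - sgElem S 1)})
        (sgConductor S + i + (sgElem S 2 - sgElem S 1) + sgMultiplicity S) := by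
  obtain ⟨h1, h12, h23, h3c, hu, hv⟩ := hS.sgElem_bounds hk
  have hmc := hS.sgMultiplicity_lt_sgConductor hk
  have ha : IsRightGenerator S (sgConductor S + i) :=
    (hS.isRightGenerator_iff hmc).2 ⟨by omega, by omega, h₀⟩
  have hb : IsRightGenerator (S \ {sgConductor S + i})
      (sgConductor S + i + (sgElem S 2 - sgElem S 1)) := by
    rw [hS.isRightGenerator_diff_singleton_iff hmc ha]
    rcases (show sgElem S 2 - sgElem S 1 < sgMultiplicity S ∨
        sgElem S 2 - sgElem S 1 = sgMultiplicity S by omega) with hum | hum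
    · -- `2m` lies beyond `λ₂`, so `λ₃ ≤ 2m` and `c + i + u < c + m`
      have h3m : sgElem S 3 ≤ sgMultiplicity S + sgMultiplicity S :=
        hS.sgElem_succ_le (hS.2.1 _ hS.sgMultiplicity_spec.1 _ hS.sgMultiplicity_spec.1) (by omega)
      exact Or.inl ⟨(hS.isRightGenerator_iff hmc).2 ⟨by omega, by omega, h₁⟩, by omega⟩
    · refine Or.inr ⟨by omega, ha, hS.isMinimalGenerator_of_not_isLeftSum hk Set.sdiff_subset
        ⟨hS.mem_of_sgConductor_le (by omega), by simp; omega⟩ (by omega) (by omega)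
        (by rwa [hum] at h₁) (by simp) (by omega)⟩
  refine ⟨ha, hb, (hS.isRightGenerator_diff_diff_iff hmc ha hb).2 (Or.inr ⟨rfl, ?_⟩)⟩
  exact hS.isMinimalGenerator_of_not_isLeftSum hk (Set.sdiff_subset.trans Set.sdiff_subset)
    ⟨⟨hS.mem_of_sgConductor_le (by omega), by simp; omega⟩, by simp; omega⟩ (by omega) (by omega)
    h₂ (by simp) (by simp; omega)

end IsNumericalSemigroup

/-! ### Counting great-grandchildren -/

open scoped Classical in
noncomputable def rightGeneratorFinset (S : Set ℕ) : Finset ℕ :=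
  (Finset.Ico (sgConductor S) (sgConductor S + sgMultiplicity S)).filter (IsRightGenerator S)

open scoped Classical in
noncomputable def strongGeneratorFinset (S : Set ℕ) : Finset ℕ :=
  (rightGeneratorFinset S).filter (IsStrongGenerator S)

open scoped Classical in
noncomputable def xIndexFinset (S : Set ℕ) : Finset ℕ :=
  (Finset.range (sgElem S 3 - sgElem S 2)).filter fun i =>
    ¬ IsLeftSum S (sgConductor S + i) ∧
    ¬ IsLeftSum S (sgConductor S + i + (sgElem S 2 - sgElem S 1)) ∧
    ¬ IsLeftSum S (sgConductor S + i + (sgElem S 2 - sgElem S 1) + sgMultiplicity S)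

noncomputable def strongGeneratorRemovals (S : Set ℕ) : Finset (Finset ℕ) :=
  ((strongGeneratorFinset S).sigma fun μ => (rightGeneratorFinset S).erase μ).image
    fun p => {p.1, p.2, p.1 + sgMultiplicity S}

noncomputable def xIndexRemovals (S : Set ℕ) : Finset (Finset ℕ) :=
  (xIndexFinset S).image fun i =>
    {sgConductor S + i, sgConductor S + i + (sgElem S 2 - sgElem S 1),
      sgConductor S + i + (sgElem S 2 - sgElem S 1) + sgMultiplicity S}

/-- The sets `D` with `S ∖ D` a great-grandchild of `S`. -/
noncomputable def greatGrandchildRemovals (S : Set ℕ) : Finset (Finset ℕ) :=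
  (rightGeneratorFinset S).powersetCard 3 ∪ strongGeneratorRemovals S ∪ xIndexRemovals S

lemma Finset.exists_lt_lt_eq_of_card_eq_three {α : Type*} [LinearOrder α] {s : Finset α}
    (hs : s.card = 3) : ∃ a b c, a < b ∧ b < c ∧ s = {a, b, c} := by
  refine ⟨s.orderEmbOfFin hs 0, s.orderEmbOfFin hs 1, s.orderEmbOfFin hs 2, by simp, by simp, ?_⟩
  ext y
  rw [← Finset.mem_coe, ← Finset.range_orderEmbOfFin s hs, Set.mem_range]
  simp only [Finset.mem_insert, Finset.mem_singleton]
  constructor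
  · rintro ⟨i, rfl⟩
    fin_cases i <;> simp
  · rintro (rfl | rfl | rfl) <;> exact ⟨_, rfl⟩

lemma Set.sdiff_coe_triple {α : Type*} [DecidableEq α] (S : Set α) (a b x : α) :
    S \ ↑({a, b, x} : Finset α) = ((S \ {a}) \ {b}) \ {x} := by
  ext y
  simp only [Finset.coe_insert, Finset.coe_singleton, Set.mem_sdiff, Set.mem_insert_iff,
    Set.mem_singleton_iff]
  tauto

lemma isGreatGrandchild_iff {S T : Set ℕ} :
    IsGreatGrandchild T S ↔ ∃ a b x, IsRightGenerator S a ∧ IsRightGenerator (S \ {a}) b ∧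
      IsRightGenerator ((S \ {a}) \ {b}) x ∧ T = ((S \ {a}) \ {b}) \ {x} := by
  constructor
  · rintro ⟨_, ⟨_, ⟨a, ha, rfl⟩, ⟨b, hb, rfl⟩⟩, ⟨x, hx, rfl⟩⟩
    exact ⟨a, b, x, ha, hb, hx, rfl⟩
  · rintro ⟨a, b, x, ha, hb, hx, rfl⟩
    exact ⟨_, ⟨_, ⟨a, ha, rfl⟩, ⟨b, hb, rfl⟩⟩, ⟨x, hx, rfl⟩⟩

lemma card_xIndexRemovals (S : Set ℕ) : (xIndexRemovals S).card = (xIndexFinset S).card := by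
  refine Finset.card_image_of_injective _ fun i j heq => ?_
  have hi := (Finset.ext_iff.1 heq (sgConductor S + i)).1 (by simp)
  have hj := (Finset.ext_iff.1 heq (sgConductor S + j)).2 (by simp)
  simp only [Finset.mem_insert, Finset.mem_singleton] at hi hj
  omega

lemma mem_xIndexRemovals {S : Set ℕ} {a : ℕ} (hca : sgConductor S ≤ a)
    (hav : a < sgConductor S + (sgElem S 3 - sgElem S 2)) (h₀ : ¬ IsLeftSum S a)
    (h₁ : ¬ IsLeftSum S (a + (sgElem S 2 - sgElem S 1)))
    (h₂ : ¬ IsLeftSum S (a + (sgElem S 2 - sgElem S 1) + sgMultiplicity S)) :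
    ({a, a + (sgElem S 2 - sgElem S 1), a + (sgElem S 2 - sgElem S 1) + sgMultiplicity S} :
      Finset ℕ) ∈ xIndexRemovals S := by
  obtain ⟨i, rfl⟩ := Nat.exists_eq_add_of_le hca
  simp only [xIndexRemovals, Finset.mem_image, xIndexFinset, Finset.mem_filter,
    Finset.mem_range]
  exact ⟨i, ⟨by omega, h₀, h₁, h₂⟩, rfl⟩

lemma le_and_lt_of_mem_rightGeneratorFinset {S : Set ℕ} {y : ℕ}
    (hy : y ∈ rightGeneratorFinset S) :
    sgConductor S ≤ y ∧ y < sgConductor S + sgMultiplicity S := by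
  simp only [rightGeneratorFinset, Finset.mem_filter, Finset.mem_Ico] at hy
  exact hy.1

lemma mem_rightGeneratorFinset_of_mem_strongGeneratorFinset {S : Set ℕ} {μ : ℕ}
    (hμ : μ ∈ strongGeneratorFinset S) : μ ∈ rightGeneratorFinset S := by
  simp only [strongGeneratorFinset, Finset.mem_filter] at hμ
  exact hμ.1

lemma card_strongGeneratorRemovals (S : Set ℕ) :
    (strongGeneratorRemovals S).card =
      (strongGeneratorFinset S).card * ((rightGeneratorFinset S).card - 1) := by
  rw [strongGeneratorRemovals, Finset.card_image_of_injOn, Finset.card_sigma,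
    Finset.sum_const_nat fun μ hμ => Finset.card_erase_of_mem
      (mem_rightGeneratorFinset_of_mem_strongGeneratorFinset hμ)]
  -- `μ + m` is the only element `≥ c + m`, which recovers `μ` and then `ν`
  rintro ⟨μ, ν⟩ hμν ⟨μ', ν'⟩ hμν' heq
  simp only [Finset.coe_sigma, Set.mem_sigma_iff, Finset.mem_coe, Finset.mem_erase] at hμν hμν'
  dsimp only at heq
  obtain ⟨hμ, hνμ, hν⟩ := hμν
  obtain ⟨hμ', -, hν'⟩ := hμν'
  have h₁ := heq ▸ (show μ + sgMultiplicity S ∈ ({μ, ν, μ + sgMultiplicity S} : Finset ℕ) by simp)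
  have h₂ := heq ▸ (show ν ∈ ({μ, ν, μ + sgMultiplicity S} : Finset ℕ) by simp)
  simp only [Finset.mem_insert, Finset.mem_singleton] at h₁ h₂
  have := le_and_lt_of_mem_rightGeneratorFinset
    (mem_rightGeneratorFinset_of_mem_strongGeneratorFinset hμ)
  have := le_and_lt_of_mem_rightGeneratorFinset
    (mem_rightGeneratorFinset_of_mem_strongGeneratorFinset hμ')
  have := le_and_lt_of_mem_rightGeneratorFinset hν
  have := le_and_lt_of_mem_rightGeneratorFinset hν'
  obtain rfl : μ = μ' := by omega
  obtain rfl : ν = ν' := by omega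
  rfl

lemma lt_of_mem_powersetCard_rightGeneratorFinset {S : Set ℕ} {D : Finset ℕ}
    (hD : D ∈ (rightGeneratorFinset S).powersetCard 3) {y : ℕ} (hy : y ∈ D) :
    y < sgConductor S + sgMultiplicity S :=
  (le_and_lt_of_mem_rightGeneratorFinset ((Finset.mem_powersetCard.1 hD).1 hy)).2

lemma disjoint_powersetCard_strongGeneratorRemovals (S : Set ℕ) :
    Disjoint ((rightGeneratorFinset S).powersetCard 3) (strongGeneratorRemovals S) := by
  refine Finset.disjoint_left.2 fun D hD hDs => ?_
  simp only [strongGeneratorRemovals, Finset.mem_image, Finset.mem_sigma] at hDs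
  obtain ⟨⟨μ, ν⟩, ⟨hμ, -⟩, rfl⟩ := hDs
  dsimp only at hμ ⊢
  have := lt_of_mem_powersetCard_rightGeneratorFinset hD
    (show μ + sgMultiplicity S ∈ ({μ, ν, μ + sgMultiplicity S} : Finset ℕ) by simp)
  have := le_and_lt_of_mem_rightGeneratorFinset
    (mem_rightGeneratorFinset_of_mem_strongGeneratorFinset hμ)
  omega

namespace IsNumericalSemigroup

variable {S : Set ℕ}

lemma mem_rightGeneratorFinset (hS : IsNumericalSemigroup S)
    (hmc : sgMultiplicity S < sgConductor S) {μ : ℕ} :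
    μ ∈ rightGeneratorFinset S ↔ IsRightGenerator S μ := by
  have := hS.isRightGenerator_iff hmc (x := μ)
  simp only [rightGeneratorFinset, Finset.mem_filter, Finset.mem_Ico]
  tauto

lemma mem_strongGeneratorFinset (hS : IsNumericalSemigroup S)
    (hmc : sgMultiplicity S < sgConductor S) {μ : ℕ} :
    μ ∈ strongGeneratorFinset S ↔ IsStrongGenerator S μ := by
  simp only [strongGeneratorFinset, Finset.mem_filter, hS.mem_rightGeneratorFinset hmc]
  exact ⟨And.right, fun h => ⟨h.1, h⟩⟩

lemma sgConductor_le_lt_lt_of_chain (hS : IsNumericalSemigroup S) {a b x : ℕ}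
    (ha : IsRightGenerator S a) (hb : IsRightGenerator (S \ {a}) b)
    (hx : IsRightGenerator ((S \ {a}) \ {b}) x) : sgConductor S ≤ a ∧ a < b ∧ b < x :=
  ⟨ha.sgConductor_le, hS.sgFrobenius_diff_singleton ha.sgConductor_le ▸ hb.2,
    (hS.diff_singleton ha.1).sgFrobenius_diff_singleton hb.sgConductor_le ▸ hx.2⟩

lemma not_isLeftSum_of_chain (hS : IsNumericalSemigroup S) {a b x : ℕ}
    (ha : IsRightGenerator S a) (hb : IsRightGenerator (S \ {a}) b)
    (hx : IsRightGenerator ((S \ {a}) \ {b}) x) :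
    ¬ IsLeftSum S a ∧ ¬ IsLeftSum S b ∧ ¬ IsLeftSum S x := by
  obtain ⟨hca, hab, hbx⟩ := hS.sgConductor_le_lt_lt_of_chain ha hb hx
  exact ⟨ha.1.not_isLeftSum (fun _ h _ => h) hca,
    hb.1.not_isLeftSum (fun y hy hyc => ⟨hy, by simp; omega⟩) (by omega),
    hx.1.not_isLeftSum (fun y hy hyc => ⟨⟨hy, by simp; omega⟩, by simp; omega⟩) (by omega)⟩

theorem mem_greatGrandchildRemovals_of_chain (hS : IsNumericalSemigroup S)
    (hk : 3 ≤ sgRank S) {a b x : ℕ} (ha : IsRightGenerator S a)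
    (hb : IsRightGenerator (S \ {a}) b) (hx : IsRightGenerator ((S \ {a}) \ {b}) x) :
    ({a, b, x} : Finset ℕ) ∈ greatGrandchildRemovals S := by
  have hmc := hS.sgMultiplicity_lt_sgConductor hk
  obtain ⟨hca, hab, hbx⟩ := hS.sgConductor_le_lt_lt_of_chain ha hb hx
  obtain ⟨hleft_a, hleft_b, hleft_x⟩ := hS.not_isLeftSum_of_chain ha hb hx
  rw [hS.isRightGenerator_diff_diff_iff hmc ha hb] at hx
  rw [hS.isRightGenerator_diff_singleton_iff hmc ha] at hb
  simp only [greatGrandchildRemovals, strongGeneratorRemovals, Finset.mem_union]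
  rcases hb with ⟨hb, -⟩ | ⟨rfl, has⟩
  · rcases hx with ⟨⟨hx, -⟩ | ⟨rfl, has⟩, -⟩ | ⟨rfl, hmin⟩
    · refine Or.inl (Or.inl (Finset.mem_powersetCard.2 ⟨?_, ?_⟩))
      · intro y hy
        simp only [Finset.mem_insert, Finset.mem_singleton] at hy
        rcases hy with rfl | rfl | rfl <;> simpa [hS.mem_rightGeneratorFinset hmc]
      · exact Finset.card_eq_three.2 ⟨a, b, x, by omega, by omega, by omega, rfl⟩
    · refine Or.inl (Or.inr (Finset.mem_image.2 ⟨⟨a, b⟩, ?_, rfl⟩))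
      simp only [Finset.mem_sigma, Finset.mem_erase, hS.mem_strongGeneratorFinset hmc,
        hS.mem_rightGeneratorFinset hmc]
      exact ⟨has, by omega, hb⟩
    · by_cases hbs : IsStrongGenerator S b
      · refine Or.inl (Or.inr (Finset.mem_image.2 ⟨⟨b, a⟩, ?_, Finset.insert_comm _ _ _⟩))
        simp only [Finset.mem_sigma, Finset.mem_erase, hS.mem_strongGeneratorFinset hmc,
          hS.mem_rightGeneratorFinset hmc]
        exact ⟨hbs, by omega, ha⟩
      · obtain ⟨rfl, hav⟩ := hS.eq_add_of_not_isStrongGenerator hk ha hb hab hbs hmin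
        exact Or.inr (mem_xIndexRemovals hca hav hleft_a hleft_b hleft_x)
  · rcases hx with ⟨⟨hx, -⟩ | ⟨rfl, -⟩, -⟩ | ⟨rfl, hmin⟩
    · have := ((hS.isRightGenerator_iff hmc).1 hx).2.1
      omega
    · omega
    · obtain ⟨hum, hav⟩ := hS.eq_multiplicity_of_isMinimalGenerator hk ha hmin
      have hmem := mem_xIndexRemovals hca hav hleft_a
      rw [hum] at hmem
      exact Or.inr (hmem hleft_b hleft_x)

theorem exists_chain_of_mem_greatGrandchildRemovals (hS : IsNumericalSemigroup S)
    (hk : 3 ≤ sgRank S) {D : Finset ℕ} (hD : D ∈ greatGrandchildRemovals S) :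
    ∃ a b x, IsRightGenerator S a ∧ IsRightGenerator (S \ {a}) b ∧
      IsRightGenerator ((S \ {a}) \ {b}) x ∧ D = {a, b, x} := by
  have hmc := hS.sgMultiplicity_lt_sgConductor hk
  simp only [greatGrandchildRemovals, strongGeneratorRemovals, xIndexRemovals, Finset.mem_union,
    Finset.mem_powersetCard, Finset.mem_image, Finset.mem_sigma, Finset.mem_erase, xIndexFinset,
    Finset.mem_filter, Finset.mem_range, hS.mem_rightGeneratorFinset hmc, hS.mem_strongGeneratorFinset hmc] at hD
  rcases hD with (⟨hDR, hD3⟩ | ⟨⟨μ, ν⟩, ⟨hμ, hνμ, hν⟩, rfl⟩) | ⟨i, ⟨hi, h₀, h₁, h₂⟩, rfl⟩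
  · obtain ⟨a, b, x, hab, hbx, rfl⟩ := Finset.exists_lt_lt_eq_of_card_eq_three hD3
    have hR : ∀ y ∈ ({a, b, x} : Finset ℕ), IsRightGenerator S y := fun y hy =>
      (hS.mem_rightGeneratorFinset hmc).1 (hDR hy)
    have ha := hR a (by simp)
    have hb := (hS.isRightGenerator_diff_singleton_iff hmc ha).2 (Or.inl ⟨hR b (by simp), hab⟩)
    exact ⟨a, b, x, ha, hb, (hS.isRightGenerator_diff_diff_iff hmc ha hb).2
      (Or.inl ⟨Or.inl ⟨hR x (by simp), by omega⟩, hbx⟩), rfl⟩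
  · dsimp only at hμ hνμ hν ⊢
    have hm0 := hS.sgMultiplicity_spec.2
    have hμc := (hS.isRightGenerator_iff hmc).1 hμ.1
    have hνc := (hS.isRightGenerator_iff hmc).1 hν
    rcases lt_or_gt_of_ne (Ne.symm hνμ) with hlt | hlt
    · have hb := (hS.isRightGenerator_diff_singleton_iff hmc hμ.1).2 (Or.inl ⟨hν, hlt⟩)
      exact ⟨μ, ν, _, hμ.1, hb, (hS.isRightGenerator_diff_diff_iff hmc hμ.1 hb).2
        (Or.inl ⟨Or.inr ⟨rfl, hμ⟩, by omega⟩), rfl⟩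
    · have hb := (hS.isRightGenerator_diff_singleton_iff hmc hν).2 (Or.inl ⟨hμ.1, hlt⟩)
      have hmin : IsMinimalGenerator ((S \ {ν}) \ {μ}) (μ + sgMultiplicity S) :=
        hμ.2.mono (fun y hy => ⟨hy.1.1, hy.2⟩)
          ⟨⟨hS.mem_of_sgConductor_le (by omega), by simp; omega⟩, by simp; omega⟩
      exact ⟨ν, μ, _, hν, hb, (hS.isRightGenerator_diff_diff_iff hmc hν hb).2
        (Or.inr ⟨rfl, hmin⟩), Finset.insert_comm _ _ _⟩
  · obtain ⟨ha, hb, hx⟩ := hS.isRightGenerator_chain_of_not_isLeftSum hk hi h₀ h₁ h₂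
    exact ⟨_, _, _, ha, hb, hx, rfl⟩

theorem setOf_isGreatGrandchild_eq_image (hS : IsNumericalSemigroup S) (hk : 3 ≤ sgRank S) :
    {T | IsGreatGrandchild T S} =
      (fun D : Finset ℕ => S \ ↑D) '' ↑(greatGrandchildRemovals S) := by
  ext T
  simp only [Set.mem_ofPred_eq, isGreatGrandchild_iff, Set.mem_image, Finset.mem_coe]
  constructor
  · rintro ⟨a, b, x, ha, hb, hx, rfl⟩
    exact ⟨_, hS.mem_greatGrandchildRemovals_of_chain hk ha hb hx, Set.sdiff_coe_triple S a b x⟩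
  · rintro ⟨D, hD, rfl⟩
    obtain ⟨a, b, x, ha, hb, hx, rfl⟩ := hS.exists_chain_of_mem_greatGrandchildRemovals hk hD
    exact ⟨a, b, x, ha, hb, hx, Set.sdiff_coe_triple S a b x⟩

/-- The sets of the last family contain the element `c + i + u + m ≥ c + m`, which in a set of
the second family can only be `μ + m`; but then `μ = c + i + u` could not be strong. -/
lemma disjoint_xIndexRemovals (hS : IsNumericalSemigroup S) (hk : 3 ≤ sgRank S) :
    Disjoint ((rightGeneratorFinset S).powersetCard 3 ∪ strongGeneratorRemovals S)
      (xIndexRemovals S) := by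
  refine Finset.disjoint_left.2 fun D hD hDx => ?_
  simp only [xIndexRemovals, xIndexFinset, Finset.mem_image, Finset.mem_filter,
    Finset.mem_range] at hDx
  obtain ⟨i, ⟨hi, -⟩, rfl⟩ := hDx
  have hmem : sgConductor S + i + (sgElem S 2 - sgElem S 1) + sgMultiplicity S ∈
      ({sgConductor S + i, sgConductor S + i + (sgElem S 2 - sgElem S 1),
        sgConductor S + i + (sgElem S 2 - sgElem S 1) + sgMultiplicity S} : Finset ℕ) := by
    simp
  rcases Finset.mem_union.1 hD with hD | hD
  · have := lt_of_mem_powersetCard_rightGeneratorFinset hD hmem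
    omega
  simp only [strongGeneratorRemovals, Finset.mem_image, Finset.mem_sigma, Finset.mem_erase] at hD
  obtain ⟨⟨μ, ν⟩, ⟨hμ, -, hν⟩, heq⟩ := hD
  dsimp only at hμ hν heq
  rw [← heq] at hmem
  simp only [Finset.mem_insert, Finset.mem_singleton] at hmem
  have hμR := mem_rightGeneratorFinset_of_mem_strongGeneratorFinset hμ
  have := hS.lt_of_isStrongGenerator hk
    ((hS.mem_strongGeneratorFinset (hS.sgMultiplicity_lt_sgConductor hk)).1 hμ)
  have := le_and_lt_of_mem_rightGeneratorFinset hμR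
  have := le_and_lt_of_mem_rightGeneratorFinset hν
  omega

lemma card_greatGrandchildRemovals (hS : IsNumericalSemigroup S) (hk : 3 ≤ sgRank S) :
    (greatGrandchildRemovals S).card =
      (rightGeneratorFinset S).card.choose 3 +
        (strongGeneratorFinset S).card * ((rightGeneratorFinset S).card - 1) +
        (xIndexFinset S).card := by
  rw [greatGrandchildRemovals, Finset.card_union_of_disjoint (hS.disjoint_xIndexRemovals hk),
    Finset.card_union_of_disjoint (disjoint_powersetCard_strongGeneratorRemovals S),
    Finset.card_powersetCard, card_strongGeneratorRemovals, card_xIndexRemovals]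

lemma ncard_setOf_isGreatGrandchild (hS : IsNumericalSemigroup S) (hk : 3 ≤ sgRank S) :
    {T | IsGreatGrandchild T S}.ncard = (greatGrandchildRemovals S).card := by
  have hsub : ∀ D ∈ greatGrandchildRemovals S, (D : Set ℕ) ⊆ S := by
    intro D hD
    obtain ⟨a, b, x, ha, hb, hx, rfl⟩ := hS.exists_chain_of_mem_greatGrandchildRemovals hk hD
    obtain ⟨hca, hab, hbx⟩ := hS.sgConductor_le_lt_lt_of_chain ha hb hx
    intro y hy
    simp only [Finset.coe_insert, Finset.coe_singleton, Set.mem_insert_iff,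
      Set.mem_singleton_iff] at hy
    exact hS.mem_of_sgConductor_le (by omega)
  rw [hS.setOf_isGreatGrandchild_eq_image hk, Set.InjOn.ncard_image, Set.ncard_coe_finset]
  intro D₁ hD₁ D₂ hD₂ heq
  rw [← Finset.coe_inj, ← sdiff_sdiff_eq_self (hsub D₁ hD₁), ← sdiff_sdiff_eq_self (hsub D₂ hD₂)]
  exact congrArg (S \ ·) heq

lemma ncard_setOf_isRightGenerator (hS : IsNumericalSemigroup S)
    (hmc : sgMultiplicity S < sgConductor S) :
    {μ | IsRightGenerator S μ}.ncard = (rightGeneratorFinset S).card := by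
  rw [← Set.ncard_coe_finset]
  congr 1
  ext μ
  exact (hS.mem_rightGeneratorFinset hmc).symm

lemma ncard_setOf_isStrongGenerator (hS : IsNumericalSemigroup S)
    (hmc : sgMultiplicity S < sgConductor S) :
    {μ | IsStrongGenerator S μ}.ncard = (strongGeneratorFinset S).card := by
  rw [← Set.ncard_coe_finset]
  congr 1
  ext μ
  exact (hS.mem_strongGeneratorFinset hmc).symm

end IsNumericalSemigroup

theorem statement13 (S : Set ℕ) (hS : IsNumericalSemigroup S) (hk : 3 ≤ sgRank S)
    (r σ X : ℕ)
    (hr : r = {μ : ℕ | IsRightGenerator S μ}.ncard)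
    (hσ : σ = {μ : ℕ | IsStrongGenerator S μ}.ncard)
    (hX : X = {i : ℕ | i < sgElem S 3 - sgElem S 2 ∧
        (¬ ∃ a ∈ sgLeftElements S, ∃ b ∈ sgLeftElements S,
            a + b = sgConductor S + i) ∧
        (¬ ∃ a ∈ sgLeftElements S, ∃ b ∈ sgLeftElements S,
            a + b = sgConductor S + i + (sgElem S 2 - sgElem S 1)) ∧
        (¬ ∃ a ∈ sgLeftElements S, ∃ b ∈ sgLeftElements S,
            a + b = sgConductor S + i + (sgElem S 2 - sgElem S 1) +
              sgMultiplicity S)}.ncard) :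
    {T : Set ℕ | IsGreatGrandchild T S}.ncard =
      Nat.choose r 3 + σ * (r - 1) + X := by
  have hmc := hS.sgMultiplicity_lt_sgConductor hk
  have hX' : X = (xIndexFinset S).card := by
    rw [hX, ← Set.ncard_coe_finset]
    congr 1
    ext i
    simp only [xIndexFinset, Finset.mem_coe, Finset.mem_filter, Finset.mem_range,
      Set.mem_ofPred_eq]
    rfl
  rw [hS.ncard_setOf_isGreatGrandchild hk, hS.card_greatGrandchildRemovals hk, hr, hσ, hX',
    hS.ncard_setOf_isRightGenerator hmc, hS.ncard_setOf_isStrongGenerator hmc]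
end

section
/- Let m and u be integers with 1 < u ≤ m and let Λ = {0, m} ∪ {n ∈ ℕ : n ≥ m+u}, a numerical semigroup of rank 2. Then the number of strong generators of Λ is u−1 if m < 2u, and u if m ≥ 2u. -/
/-!
Write `Λ = {0, m} ∪ [m + u, ∞)`. Its Frobenius number is `m + u - 1` and its multiplicity is `m`.
The sums of two nonzero elements of `Λ` are `2m` and everything from `2m + u` on, so the right
generators are `[m + u, 2m + u) ∖ {2m}`. Removing such a `μ`, the element `μ + m` splits in
`Λ ∖ {μ}` only as `(m + u) + (μ - u)`, which is possible exactly when `μ ≥ m + 2u`. Since `u ≤ m`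
the strong generators are therefore `[m + u, m + 2u) ∖ {2m}`, and `2m` lies in that interval
exactly when `m < 2u`.
-/

theorem sgConductor_eq_of_isLeast {S : Set ℕ} {c : ℕ}
    (h : IsLeast {N : ℕ | ∀ n : ℕ, N ≤ n → n ∈ S} c) : sgConductor S = c :=
  h.csInf_eq

theorem sgMultiplicity_eq_of_isLeast {S : Set ℕ} {m : ℕ}
    (h : IsLeast {n : ℕ | n ∈ S ∧ n ≠ 0} m) : sgMultiplicity S = m :=
  h.csInf_eq

def sparseSemigroup (m u : ℕ) : Set ℕ :=
  ({0, m} : Set ℕ) ∪ {n : ℕ | m + u ≤ n}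

namespace sparseSemigroup

variable {m u μ : ℕ}

theorem mem_iff {n : ℕ} : n ∈ sparseSemigroup m u ↔ n = 0 ∨ n = m ∨ m + u ≤ n := by
  simp only [sparseSemigroup, Set.mem_union, Set.mem_insert_iff, Set.mem_singleton_iff,
    Set.mem_ofPred_eq, or_assoc]

theorem sgFrobenius_eq (hu : 1 < u) : sgFrobenius (sparseSemigroup m u) = m + u - 1 := by
  suffices sgConductor (sparseSemigroup m u) = m + u by rw [sgFrobenius, this]
  refine sgConductor_eq_of_isLeast ⟨fun n hn => mem_iff.2 (.inr (.inr hn)), fun N hN => ?_⟩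
  by_contra! hlt
  rcases mem_iff.1 (hN (m + u - 1) (by omega)) with h | h | h <;> omega

theorem sgMultiplicity_eq (hm : m ≠ 0) : sgMultiplicity (sparseSemigroup m u) = m := by
  refine sgMultiplicity_eq_of_isLeast ⟨⟨mem_iff.2 (.inr (.inl rfl)), hm⟩, ?_⟩
  rintro n ⟨hn, hn0⟩
  rcases mem_iff.1 hn with h | h | h <;> omega

theorem isRightGenerator_iff (hm : m ≠ 0) (hu : 1 < u) :
    IsRightGenerator (sparseSemigroup m u) μ ↔ m + u ≤ μ ∧ μ < 2 * m + u ∧ μ ≠ 2 * m := by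
  simp only [IsRightGenerator, IsMinimalGenerator, sgFrobenius_eq hu]
  constructor
  · rintro ⟨⟨-, -, hdecomp⟩, hF⟩
    refine ⟨by omega, ?_, ?_⟩
    · by_contra! hle
      exact hdecomp ⟨m, mem_iff.2 (.inr (.inl rfl)),
        μ - m, mem_iff.2 (.inr (.inr (by omega : m + u ≤ μ - m))), by omega, by omega, by omega⟩
    · rintro rfl
      exact hdecomp ⟨m, mem_iff.2 (.inr (.inl rfl)), m, mem_iff.2 (.inr (.inl rfl)),
        by omega, by omega, by omega⟩
  · rintro ⟨hlow, hhigh, h2m⟩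
    refine ⟨⟨mem_iff.2 (.inr (.inr hlow)), by omega, ?_⟩, by omega⟩
    rintro ⟨a, ha, b, hb, ha0, hb0, hab⟩
    rcases mem_iff.1 ha with ha | ha | ha <;> rcases mem_iff.1 hb with hb | hb | hb <;> omega

theorem isMinimalGenerator_sdiff_add_iff (hm : m ≠ 0) (hu : 0 < u) (hμ : m + u ≤ μ) :
    IsMinimalGenerator (sparseSemigroup m u \ {μ}) (μ + m) ↔ μ < m + 2 * u := by
  have mem_sdiff {n : ℕ} :
      n ∈ sparseSemigroup m u \ {μ} ↔ (n = 0 ∨ n = m ∨ m + u ≤ n) ∧ n ≠ μ := by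
    rw [Set.mem_sdiff, mem_iff, Set.mem_singleton_iff]
  simp only [IsMinimalGenerator, mem_sdiff]
  constructor
  · rintro ⟨-, -, hdecomp⟩
    by_contra! hle
    exact hdecomp ⟨m + u, ⟨.inr (.inr le_rfl), by omega⟩,
      μ - u, ⟨.inr (.inr (by omega : m + u ≤ μ - u)), by omega⟩, by omega, by omega, by omega⟩
  · intro hlt
    refine ⟨⟨.inr (.inr (by omega)), by omega⟩, by omega, ?_⟩
    rintro ⟨a, ⟨ha, haμ⟩, b, ⟨hb, hbμ⟩, ha0, hb0, hab⟩
    rcases ha with ha | ha | ha <;> rcases hb with hb | hb | hb <;> omega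

theorem isStrongGenerator_iff (hu : 1 < u) (hum : u ≤ m) :
    IsStrongGenerator (sparseSemigroup m u) μ ↔ μ ∈ Finset.Ico (m + u) (m + 2 * u) \ {2 * m} := by
  rw [IsStrongGenerator, sgMultiplicity_eq (by omega), isRightGenerator_iff (by omega) hu]
  simp only [Finset.mem_sdiff, Finset.mem_Ico, Finset.mem_singleton]
  constructor
  · rintro ⟨⟨hlow, -, h2m⟩, hmin⟩
    exact ⟨⟨hlow, (isMinimalGenerator_sdiff_add_iff (by omega) (by omega) hlow).1 hmin⟩, h2m⟩
  · rintro ⟨⟨hlow, hhigh⟩, h2m⟩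
    exact ⟨⟨hlow, by omega, h2m⟩,
      (isMinimalGenerator_sdiff_add_iff (by omega) (by omega) hlow).2 hhigh⟩

end sparseSemigroup

theorem statement14 (m u : ℕ) (hu : 1 < u) (hum : u ≤ m) :
    {μ : ℕ | IsStrongGenerator (({0, m} : Set ℕ) ∪ {n : ℕ | m + u ≤ n}) μ}.ncard =
      if m < 2 * u then u - 1 else u := by
  have hset : {μ : ℕ | IsStrongGenerator (sparseSemigroup m u) μ} =
      ↑(Finset.Ico (m + u) (m + 2 * u) \ {2 * m}) :=
    Set.ext fun _ => sparseSemigroup.isStrongGenerator_iff hu hum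
  rw [← sparseSemigroup, hset, Set.ncard_coe_finset]
  split_ifs with h
  · rw [Finset.card_sdiff_of_subset (by simp [Finset.mem_Ico]; omega), Nat.card_Ico,
      Finset.card_singleton]
    omega
  · rw [Finset.sdiff_eq_self_of_disjoint (by simp [Finset.mem_Ico]; omega), Nat.card_Ico]
    omega
end

section
/- Let m ≥ 2 and let Λ_m = {0} ∪ {n ∈ ℕ : n ≥ m} be the nontrivial ordinary numerical semigroup of multiplicity m. Then: (i) the right generators μ of Λ_m for which Λ_m∖{μ} has at least one new generator are exactly m and m+1; (ii) the new generators of Λ_m∖{m} are exactly 2m and 2m+1; (iii) the unique new generator of Λ_m∖{m+1} is 2m+1. -/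
lemma sgConductor_eq_succ {T : Set ℕ} {f : ℕ} (h_ge : ∀ n, f < n → n ∈ T) (h_f : f ∉ T) :
    sgConductor T = f + 1 := by
  refine le_antisymm (Nat.sInf_le h_ge) (le_csInf ⟨f + 1, h_ge⟩ fun N hN => ?_)
  by_contra! hN_le
  exact h_f (hN f (by omega))

lemma sgFrobenius_eq {T : Set ℕ} {f : ℕ} (h_ge : ∀ n, f < n → n ∈ T) (h_f : f ∉ T) :
    sgFrobenius T = f := by
  rw [sgFrobenius, sgConductor_eq_succ h_ge h_f, Nat.add_sub_cancel]

lemma mem_of_sgFrobenius_lt {S : Set ℕ} (hS : ∃ N, ∀ n, N ≤ n → n ∈ S) {n : ℕ}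
    (hn : sgFrobenius S < n) : n ∈ S :=
  Nat.sInf_mem (s := {N | ∀ n, N ≤ n → n ∈ S}) hS n
    (by rw [sgFrobenius, sgConductor] at hn; omega)

/-- Removing an element `μ > F(Λ)` makes `μ` the new Frobenius number, and adding it back
recovers `Λ`. -/
lemma isNewGenerator_diff_singleton_iff {S : Set ℕ} (hS : ∃ N, ∀ n, N ≤ n → n ∈ S) {μ : ℕ}
    (hμ : sgFrobenius S < μ) (x : ℕ) :
    IsNewGenerator (S \ {μ}) x ↔ IsMinimalGenerator (S \ {μ}) x ∧ ¬ IsMinimalGenerator S x := by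
  have h_frob : sgFrobenius (S \ {μ}) = μ :=
    sgFrobenius_eq
      (fun n hn => ⟨mem_of_sgFrobenius_lt hS (by omega), by rw [Set.mem_singleton_iff]; omega⟩)
      (by simp)
  rw [IsNewGenerator, h_frob, Set.sdiff_union_self,
    Set.union_eq_self_of_subset_right (by simpa using mem_of_sgFrobenius_lt hS hμ)]

def ordinarySemigroup (m : ℕ) : Set ℕ :=
  {0} ∪ {n | m ≤ n}

section ordinarySemigroup

variable {m : ℕ}

lemma mem_ordinarySemigroup {x : ℕ} : x ∈ ordinarySemigroup m ↔ x = 0 ∨ m ≤ x := by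
  simp [ordinarySemigroup]

lemma ordinarySemigroup_cofinite : ∃ N, ∀ n, N ≤ n → n ∈ ordinarySemigroup m :=
  ⟨m, fun _ hn => mem_ordinarySemigroup.2 (Or.inr hn)⟩

lemma sgFrobenius_ordinarySemigroup_lt (hm : 1 ≤ m) : sgFrobenius (ordinarySemigroup m) < m := by
  have : sgConductor (ordinarySemigroup m) ≤ m :=
    Nat.sInf_le fun _ hn => mem_ordinarySemigroup.2 (Or.inr hn)
  rw [sgFrobenius]
  omega

lemma isMinimalGenerator_ordinarySemigroup_iff (hm : 1 ≤ m) (x : ℕ) :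
    IsMinimalGenerator (ordinarySemigroup m) x ↔ m ≤ x ∧ x < 2 * m := by
  simp only [IsMinimalGenerator, mem_ordinarySemigroup]
  constructor
  · rintro ⟨hx, hx0, h_indec⟩
    by_contra! h_ge
    exact h_indec ⟨m, by omega, x - m, by omega, by omega, by omega, by omega⟩
  · rintro ⟨h_lo, h_hi⟩
    refine ⟨by omega, by omega, ?_⟩
    rintro ⟨a, ha, b, hb, ha0, hb0, hab⟩
    omega

/-- Once `μ ≥ m` is removed, `x ≥ 2m` stays decomposable as `m + (x - m)` unless `μ` is one of
the two summands, in which case `(m + 1) + (x - m - 1)` works unless `x ≤ 2m + 1`. -/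
lemma isMinimalGenerator_ordinarySemigroup_diff_iff (hm : 1 ≤ m) {μ : ℕ} (hμ : m ≤ μ) (x : ℕ) :
    IsMinimalGenerator (ordinarySemigroup m \ {μ}) x ↔
      x ≠ μ ∧ (m ≤ x ∧ x < 2 * m ∨ x = 2 * m ∧ μ = m ∨ x = 2 * m + 1 ∧ μ ≤ m + 1) := by
  simp only [IsMinimalGenerator, Set.mem_sdiff, mem_ordinarySemigroup, Set.mem_singleton_iff]
  constructor
  · rintro ⟨⟨hx, hxμ⟩, hx0, h_indec⟩
    refine ⟨hxμ, ?_⟩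
    by_contra! h_dec
    by_cases h_μ : μ = m ∨ μ = x - m
    · exact h_indec ⟨m + 1, by omega, x - (m + 1), by omega, by omega, by omega, by omega⟩
    · exact h_indec ⟨m, by omega, x - m, by omega, by omega, by omega, by omega⟩
  · rintro ⟨hxμ, hx⟩
    refine ⟨⟨by omega, hxμ⟩, by omega, ?_⟩
    rintro ⟨a, ha, b, hb, ha0, hb0, hab⟩
    omega

lemma isRightGenerator_ordinarySemigroup_iff (hm : 1 ≤ m) (μ : ℕ) :
    IsRightGenerator (ordinarySemigroup m) μ ↔ m ≤ μ ∧ μ < 2 * m := by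
  rw [IsRightGenerator, isMinimalGenerator_ordinarySemigroup_iff hm]
  have := sgFrobenius_ordinarySemigroup_lt hm
  omega

lemma isNewGenerator_ordinarySemigroup_diff_iff (hm : 1 ≤ m) {μ : ℕ} (hμ : m ≤ μ) (x : ℕ) :
    IsNewGenerator (ordinarySemigroup m \ {μ}) x ↔
      x = 2 * m ∧ μ = m ∨ x = 2 * m + 1 ∧ μ ≤ m + 1 := by
  rw [isNewGenerator_diff_singleton_iff ordinarySemigroup_cofinite
      ((sgFrobenius_ordinarySemigroup_lt hm).trans_le hμ),
    isMinimalGenerator_ordinarySemigroup_diff_iff hm hμ,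
    isMinimalGenerator_ordinarySemigroup_iff hm]
  omega

end ordinarySemigroup

theorem statement15 (m : ℕ) (hm : 2 ≤ m)
    (S : Set ℕ) (hSdef : S = ({0} : Set ℕ) ∪ {n : ℕ | m ≤ n}) :
    (∀ μ : ℕ, (IsRightGenerator S μ ∧ ∃ x : ℕ, IsNewGenerator (S \ {μ}) x) ↔
      (μ = m ∨ μ = m + 1)) ∧
    (∀ x : ℕ, IsNewGenerator (S \ {m}) x ↔ (x = 2 * m ∨ x = 2 * m + 1)) ∧
    (∀ x : ℕ, IsNewGenerator (S \ {m + 1}) x ↔ x = 2 * m + 1) := by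
  obtain rfl : S = ordinarySemigroup m := hSdef
  have hm1 : 1 ≤ m := by omega
  refine ⟨fun μ => ?_, fun x => ?_, fun x => ?_⟩
  · rw [isRightGenerator_ordinarySemigroup_iff hm1]
    constructor
    · rintro ⟨⟨hμ, -⟩, x, hx⟩
      rw [isNewGenerator_ordinarySemigroup_diff_iff hm1 hμ] at hx
      omega
    · intro hμ
      have hμ_ge : m ≤ μ := by omega
      refine ⟨⟨hμ_ge, by omega⟩, 2 * m + 1, ?_⟩
      rw [isNewGenerator_ordinarySemigroup_diff_iff hm1 hμ_ge]
      omega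
  · rw [isNewGenerator_ordinarySemigroup_diff_iff hm1 le_rfl]
    omega
  · rw [isNewGenerator_ordinarySemigroup_diff_iff hm1 (by omega)]
    omega
end

section
/- For every integer g ≥ 5, the set Λ = {0} ∪ {g, g+1, …, 2g−3} ∪ {n ∈ ℕ : n ≥ 2g} is a numerical semigroup with multiplicity g, conductor 2g, genus g+1, rank g−1, exactly g−2 minimal generators and no right generators, and its Eliahou constant equals E(Λ) = g² − 5g + 2, which is positive. -/
/-!
Every sum of two nonzero elements of `Λ` is at least `2g`, so the elements of `[g, 2g-3]` are
exactly the minimal generators. Conversely every `x ≥ 2g` splits inside `Λ`: as `g + (x - g)`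
unless `3g - 3 < x < 3g`, where `x = (x - (2g - 3)) + (2g - 3)` works because `g ≥ 5`. Hence there
are no right generators, and with `c = 2g`, `m = g` one gets `q = 2`, `ρ = 0` and
`E(Λ) = (g - 1)(g - 2) - 2g = g² - 5g + 2`.
-/

theorem sgConductor_eq_of_forall_le_mem {S : Set ℕ} {c : ℕ}
    (hmem : ∀ n, c ≤ n → n ∈ S) (hgap : c - 1 ∉ S) : sgConductor S = c := by
  refine le_antisymm (Nat.sInf_le hmem) (le_csInf ⟨c, hmem⟩ fun N hN => ?_)
  by_contra! hlt
  exact hgap (hN _ (by omega))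

theorem sgMultiplicity_eq_of_forall_lt {S : Set ℕ} {m : ℕ} (hm : m ∈ S) (hm0 : m ≠ 0)
    (hlt : ∀ n ∈ S, n < m → n = 0) : sgMultiplicity S = m := by
  refine le_antisymm (Nat.sInf_le ⟨hm, hm0⟩) (le_csInf ⟨m, hm, hm0⟩ fun n ⟨hn, hn0⟩ => ?_)
  by_contra! hnm
  exact hn0 (hlt n hn hnm)

def intervalSemigroup (g : ℕ) : Set ℕ :=
  ({0} : Set ℕ) ∪ {n : ℕ | g ≤ n ∧ n ≤ 2 * g - 3} ∪ {n : ℕ | 2 * g ≤ n}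

namespace intervalSemigroup

variable {g : ℕ}

theorem mem_iff {n : ℕ} :
    n ∈ intervalSemigroup g ↔ n = 0 ∨ (g ≤ n ∧ n ≤ 2 * g - 3) ∨ 2 * g ≤ n := by
  simp only [intervalSemigroup, Set.mem_union, Set.mem_singleton_iff, Set.mem_ofPred_eq, or_assoc]

theorem isNumericalSemigroup (g : ℕ) : IsNumericalSemigroup (intervalSemigroup g) := by
  refine ⟨mem_iff.2 (Or.inl rfl), fun a ha b hb => ?_, 2 * g, fun n hn => mem_iff.2 (by omega)⟩
  rw [mem_iff] at ha hb ⊢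
  omega

theorem sgConductor_eq (hg : 1 ≤ g) : sgConductor (intervalSemigroup g) = 2 * g :=
  sgConductor_eq_of_forall_le_mem (fun n hn => mem_iff.2 (by omega))
    (fun h => by rw [mem_iff] at h; omega)

theorem sgMultiplicity_eq (hg : 3 ≤ g) : sgMultiplicity (intervalSemigroup g) = g :=
  sgMultiplicity_eq_of_forall_lt (mem_iff.2 (by omega)) (by omega)
    (fun n hn hlt => by rw [mem_iff] at hn; omega)

theorem compl_eq (hg : 2 ≤ g) :
    (intervalSemigroup g)ᶜ = ↑(Finset.Ioo 0 g ∪ Finset.Ioo (2 * g - 3) (2 * g)) := by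
  ext n
  simp only [Set.mem_compl_iff, mem_iff, Finset.coe_union, Finset.coe_Ioo, Set.mem_union,
    Set.mem_Ioo]
  omega

theorem sgGenus_eq (hg : 2 ≤ g) : sgGenus (intervalSemigroup g) = g + 1 := by
  have hdisj : Disjoint (Finset.Ioo 0 g) (Finset.Ioo (2 * g - 3) (2 * g)) := by
    simp only [Finset.disjoint_left, Finset.mem_Ioo]
    omega
  rw [sgGenus, compl_eq hg, Set.ncard_coe_finset, Finset.card_union_of_disjoint hdisj,
    Nat.card_Ioo, Nat.card_Ioo]
  omega

theorem sgRank_eq (hg : 2 ≤ g) : sgRank (intervalSemigroup g) = g - 1 := by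
  rw [sgRank, sgConductor_eq (by omega), sgGenus_eq (by omega)]
  omega

theorem exists_add_eq_of_two_mul_le (hg : 5 ≤ g) {x : ℕ} (hx : 2 * g ≤ x) :
    ∃ a ∈ intervalSemigroup g, ∃ b ∈ intervalSemigroup g, a ≠ 0 ∧ b ≠ 0 ∧ a + b = x := by
  by_cases h : x ≤ 3 * g - 3 ∨ 3 * g ≤ x
  · exact ⟨g, mem_iff.2 (by omega), x - g, mem_iff.2 (by omega), by omega, by omega, by omega⟩
  · exact ⟨x - (2 * g - 3), mem_iff.2 (by omega), 2 * g - 3, mem_iff.2 (by omega),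
      by omega, by omega, by omega⟩

theorem setOf_isMinimalGenerator (hg : 5 ≤ g) :
    {x | IsMinimalGenerator (intervalSemigroup g) x} = ↑(Finset.Ico g (2 * g - 2)) := by
  ext x
  simp only [Set.mem_ofPred_eq, Finset.coe_Ico, Set.mem_Ico, IsMinimalGenerator]
  constructor
  · rintro ⟨hx, hx0, hsplit⟩
    rcases mem_iff.1 hx with hx | hx | hx
    · omega
    · omega
    · exact absurd (exists_add_eq_of_two_mul_le hg hx) hsplit
  · refine fun hx => ⟨mem_iff.2 (by omega), by omega, ?_⟩
    rintro ⟨a, ha, b, hb, ha0, hb0, rfl⟩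
    rw [mem_iff] at ha hb
    omega

theorem ncard_setOf_isMinimalGenerator (hg : 5 ≤ g) :
    {x | IsMinimalGenerator (intervalSemigroup g) x}.ncard = g - 2 := by
  rw [setOf_isMinimalGenerator hg, Set.ncard_coe_finset, Nat.card_Ico]
  omega

theorem not_isRightGenerator (hg : 5 ≤ g) (μ : ℕ) :
    ¬ IsRightGenerator (intervalSemigroup g) μ := by
  rintro ⟨⟨-, -, hsplit⟩, hμ⟩
  rw [sgFrobenius, sgConductor_eq (by omega)] at hμ
  exact hsplit (exists_add_eq_of_two_mul_le hg (by omega))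

end intervalSemigroup

theorem statement19 (g : ℕ) (hg : 5 ≤ g)
    (S : Set ℕ)
    (hSdef : S = ({0} : Set ℕ) ∪ {n : ℕ | g ≤ n ∧ n ≤ 2 * g - 3} ∪ {n : ℕ | 2 * g ≤ n})
    (p r q ρ : ℕ)
    (hp : p = {x : ℕ | IsMinimalGenerator S x}.ncard)
    (hr : r = {x : ℕ | IsRightGenerator S x}.ncard)
    (hq : q = ⌈(sgConductor S : ℚ) / (sgMultiplicity S : ℚ)⌉₊)
    (hρ : ρ = q * sgMultiplicity S - sgConductor S) :
    IsNumericalSemigroup S ∧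
    sgMultiplicity S = g ∧
    sgConductor S = 2 * g ∧
    sgGenus S = g + 1 ∧
    sgRank S = g - 1 ∧
    p = g - 2 ∧
    (¬ ∃ μ : ℕ, IsRightGenerator S μ) ∧
    ((sgRank S : ℤ) * ((p : ℤ) - (r : ℤ)) -
      (q : ℤ) * ((sgMultiplicity S : ℤ) - (r : ℤ)) + (ρ : ℤ) =
        (g : ℤ) ^ 2 - 5 * (g : ℤ) + 2) ∧
    (0 : ℤ) < (g : ℤ) ^ 2 - 5 * (g : ℤ) + 2 := by
  have hS : S = intervalSemigroup g := hSdef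
  subst hS
  have hmult := intervalSemigroup.sgMultiplicity_eq (g := g) (by omega)
  have hcond := intervalSemigroup.sgConductor_eq (g := g) (by omega)
  have hrank := intervalSemigroup.sgRank_eq (g := g) (by omega)
  have hnoright := intervalSemigroup.not_isRightGenerator hg
  have hp' : p = g - 2 := hp.trans (intervalSemigroup.ncard_setOf_isMinimalGenerator hg)
  have hr' : r = 0 := by simp [hr, hnoright]
  have hq' : q = 2 := by
    rw [hq, hcond, hmult, Nat.cast_mul, mul_div_cancel_right₀ _ (by positivity)]
    norm_num
  have hρ' : ρ = 0 := by rw [hρ, hq', hcond, hmult]; omega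
  refine ⟨intervalSemigroup.isNumericalSemigroup g, hmult, hcond,
    intervalSemigroup.sgGenus_eq (by omega), hrank, hp', fun ⟨μ, hμ⟩ => hnoright μ hμ, ?_,
    by nlinarith⟩
  rw [hrank, hp', hr', hq', hρ', hmult, Nat.cast_sub (by omega), Nat.cast_sub (by omega)]
  push_cast
  ring
end
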